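/- arXiv:1308.0807 — 10 statements merged into one kernel-verified Lean document; each statement's English description precedes it below -/
import Mathlib

section
/- For every finite abstract argumentation framework AF, the grounded-stratified labeling is unique: if S1 and S2 are both grounded-stratified labelings of AF then S1 = S2. -/
/-- Labels for arguments: in, out, undecided. -/
inductive Lab : Type where
  | argIn | argOut | argUndec
  deriving DecidableEq

/-- The set of arguments in `C` labeled `in` by `L`. -/
def inSet {α : Type*} (C : Set α) (L : α → Lab) : Set α := {a ∈ C | L a = Lab.argIn}

/-- The set of arguments in `C` labeled `undec` by `L`. -/
def undecSet {α : Type*} (C : Set α) (L : α → Lab) : Set α := {a ∈ C | L a = Lab.argUndec}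

/-- `L` is a complete labeling of the subframework of `att` on the set `C` of arguments. -/
def IsCompleteLab {α : Type*} (att : α → α → Prop) (C : Set α) (L : α → Lab) : Prop :=
  (∀ a ∈ C, L a = Lab.argOut → ∃ b ∈ C, L b = Lab.argIn ∧ att b a) ∧
  (∀ a ∈ C, L a = Lab.argIn → ∀ b ∈ C, att b a → L b = Lab.argOut) ∧
  (∀ a ∈ C, L a = Lab.argUndec →
    (∀ b ∈ C, att b a → L b ≠ Lab.argIn) ∧ (∃ b ∈ C, att b a ∧ L b ≠ Lab.argOut))

/-- The five semantics considered. -/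
inductive Sem : Type where
  | complete | grounded | preferred | stable | semiStable

/-- `SemLab σ att C L` : `L` is a `σ`-labeling of the subframework of `att` on `C`. -/
def SemLab {α : Type*} : Sem → (α → α → Prop) → Set α → (α → Lab) → Prop
  | Sem.complete, att, C, L => IsCompleteLab att C L
  | Sem.grounded, att, C, L => IsCompleteLab att C L ∧
      ∀ L', IsCompleteLab att C L' → inSet C L' ⊆ inSet C L → inSet C L ⊆ inSet C L'
  | Sem.preferred, att, C, L => IsCompleteLab att C L ∧
      ∀ L', IsCompleteLab att C L' → inSet C L ⊆ inSet C L' → inSet C L' ⊆ inSet C L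
  | Sem.stable, att, C, L => IsCompleteLab att C L ∧ undecSet C L = ∅
  | Sem.semiStable, att, C, L => IsCompleteLab att C L ∧
      ∀ L', IsCompleteLab att C L' → undecSet C L' ⊆ undecSet C L → undecSet C L ⊆ undecSet C L'

/-- `Stratified σ att C S` : `S` is a `σ`-stratified labeling of the subframework of `att`
on the set `C` of arguments (values of `S` outside `C` are irrelevant). -/
inductive Stratified {α : Type*} (σ : Sem) (att : α → α → Prop) : Set α → (α → ℕ∞) → Prop
  | ofEmpty {C : Set α} {S : α → ℕ∞} (L : α → Lab)
      (hL : SemLab σ att C L) (hin : inSet C L = ∅)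
      (hS : ∀ a ∈ C, S a = ⊤) : Stratified σ att C S
  | ofStep {C : Set α} {S : α → ℕ∞} (L : α → Lab) (S' : α → ℕ∞)
      (hL : SemLab σ att C L) (hin : (inSet C L).Nonempty)
      (hS' : Stratified σ att (C \ inSet C L) S')
      (h0 : ∀ a ∈ inSet C L, S a = 0)
      (h1 : ∀ a ∈ C \ inSet C L, S a = 1 + S' a) :
      Stratified σ att C S


/-!
The in-set of a grounded labeling of any subframework is forced: it is the least fixed point of
Dung's defense function, which lies inside the in-set of every complete labeling and is itself the
in-set of a complete labeling. So two grounded-stratified labelings peel off the same layer at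
every step of the recursion, and they agree by induction on that recursion.
-/

section Grounded

variable {α : Type*} {att : α → α → Prop} {C : Set α} {L : α → Lab}

/-- Dung's characteristic function of the subframework on `C`. -/
def defense (att : α → α → Prop) (C : Set α) : Set α →o Set α where
  toFun E := {a | a ∈ C ∧ ∀ b ∈ C, att b a → ∃ c ∈ E, att c b}
  monotone' _ _ hE _ ha :=
    ⟨ha.1, fun b hb hba => (ha.2 b hb hba).imp fun _ hc => ⟨hE hc.1, hc.2⟩⟩

lemma IsCompleteLab.eq_out_of_attacked (hL : IsCompleteLab att C L) {b c : α} (hb : b ∈ C)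
    (hc : c ∈ C) (hcin : L c = Lab.argIn) (hcb : att c b) : L b = Lab.argOut := by
  cases hLb : L b with
  | argOut => rfl
  | argIn => simpa [hcin] using hL.2.1 b hb hLb c hc hcb
  | argUndec => exact absurd hcin ((hL.2.2 b hb hLb).1 c hc hcb)

lemma IsCompleteLab.defense_inSet_subset (hL : IsCompleteLab att C L) :
    defense att C (inSet C L) ⊆ inSet C L := by
  rintro a ⟨haC, hdef⟩
  have defeated : ∀ b ∈ C, att b a → L b = Lab.argOut := fun b hb hba =>
    let ⟨c, ⟨hcC, hcin⟩, hcb⟩ := hdef b hb hba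
    hL.eq_out_of_attacked hb hcC hcin hcb
  refine ⟨haC, ?_⟩
  cases hLa : L a with
  | argIn => rfl
  | argOut =>
    obtain ⟨b, hb, hbin, hba⟩ := hL.1 a haC hLa
    simp [defeated b hb hba] at hbin
  | argUndec =>
    obtain ⟨b, hb, hba, hbout⟩ := (hL.2.2 a haC hLa).2
    exact absurd (defeated b hb hba) hbout

def groundedExt (att : α → α → Prop) (C : Set α) : Set α :=
  OrderHom.lfp (defense att C)

lemma defense_groundedExt : defense att C (groundedExt att C) = groundedExt att C :=
  OrderHom.map_lfp _

lemma groundedExt_subset : groundedExt att C ⊆ C := by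
  rw [← defense_groundedExt]
  exact fun _ ha => ha.1

lemma IsCompleteLab.groundedExt_subset_inSet (hL : IsCompleteLab att C L) :
    groundedExt att C ⊆ inSet C L :=
  OrderHom.lfp_le _ hL.defense_inSet_subset

lemma groundedExt_conflictFree {a b : α} (ha : a ∈ groundedExt att C)
    (hb : b ∈ groundedExt att C) : ¬ att b a := by
  -- The unattacked part of the grounded extension is a prefixed point of the defense function.
  have hunattacked : groundedExt att C ⊆
      {x ∈ groundedExt att C | ∀ y ∈ groundedExt att C, ¬ att y x} := by
    refine OrderHom.lfp_le _ fun x hx => ⟨?_, fun y hyG hyx => ?_⟩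
    · exact defense_groundedExt.le ((defense att C).monotone (fun _ hz => hz.1) hx)
    · obtain ⟨z, ⟨hzG, hz⟩, hzy⟩ := hx.2 y (groundedExt_subset hyG) hyx
      rw [← defense_groundedExt] at hyG
      obtain ⟨w, hwG, hwz⟩ := hyG.2 z (groundedExt_subset hzG) hzy
      exact hz w hwG hwz
  exact (hunattacked ha).2 b hb

open Classical in
noncomputable def groundedLab (att : α → α → Prop) (C : Set α) (a : α) : Lab :=
  if a ∈ groundedExt att C then Lab.argIn
  else if ∃ c ∈ groundedExt att C, att c a then Lab.argOut
  else Lab.argUndec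

lemma groundedLab_eq_in_iff {a : α} :
    groundedLab att C a = Lab.argIn ↔ a ∈ groundedExt att C := by
  unfold groundedLab
  split_ifs <;> simp_all

lemma groundedLab_eq_out_iff {a : α} :
    groundedLab att C a = Lab.argOut ↔ ∃ c ∈ groundedExt att C, att c a := by
  unfold groundedLab
  split_ifs with ha
  · simp only [false_iff, not_exists, not_and]
    exact fun c hc => groundedExt_conflictFree ha hc
  all_goals simp_all

lemma isCompleteLab_groundedLab : IsCompleteLab att C (groundedLab att C) := by
  refine ⟨fun a _ ha => ?_, fun a _ ha b hb hba => ?_, fun a haC ha => ⟨?_, ?_⟩⟩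
  · obtain ⟨c, hcG, hca⟩ := groundedLab_eq_out_iff.1 ha
    exact ⟨c, groundedExt_subset hcG, groundedLab_eq_in_iff.2 hcG, hca⟩
  · rw [groundedLab_eq_in_iff, ← defense_groundedExt] at ha
    exact groundedLab_eq_out_iff.2 (ha.2 b hb hba)
  · intro b _ hba hbin
    have hout : groundedLab att C a = Lab.argOut :=
      groundedLab_eq_out_iff.2 ⟨b, groundedLab_eq_in_iff.1 hbin, hba⟩
    simp [hout] at ha
  · have haG : ¬ (a ∈ C ∧ ∀ b ∈ C, att b a → ∃ c ∈ groundedExt att C, att c b) := by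
      change a ∉ defense att C (groundedExt att C)
      rw [defense_groundedExt, ← groundedLab_eq_in_iff]
      simp [ha]
    push Not at haG
    obtain ⟨b, hb, hba, hundefended⟩ := haG haC
    refine ⟨b, hb, hba, fun hbout => ?_⟩
    obtain ⟨c, hcG, hcb⟩ := groundedLab_eq_out_iff.1 hbout
    exact hundefended c hcG hcb

lemma inSet_groundedLab : inSet C (groundedLab att C) = groundedExt att C := by
  ext a
  simp only [inSet, Set.mem_sep_iff, groundedLab_eq_in_iff]
  exact ⟨And.right, fun ha => ⟨groundedExt_subset ha, ha⟩⟩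

lemma inSet_eq_groundedExt (hL : SemLab Sem.grounded att C L) :
    inSet C L = groundedExt att C := by
  have hsub := hL.1.groundedExt_subset_inSet
  rw [← inSet_groundedLab] at hsub ⊢
  exact (hL.2 _ isCompleteLab_groundedLab hsub).antisymm hsub

lemma Stratified.eqOn_of_grounded {S₁ S₂ : α → ℕ∞} (h₁ : Stratified Sem.grounded att C S₁)
    (h₂ : Stratified Sem.grounded att C S₂) : Set.EqOn S₁ S₂ C := by
  induction h₁ generalizing S₂ with
  | ofEmpty L₁ hL₁ hin₁ hS₁ =>
    cases h₂ with
    | ofEmpty _ _ _ hS₂ => exact fun a ha => (hS₁ a ha).trans (hS₂ a ha).symm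
    | ofStep L₂ _ hL₂ hin₂ =>
      rw [inSet_eq_groundedExt hL₂, ← inSet_eq_groundedExt hL₁, hin₁] at hin₂
      exact absurd hin₂ Set.not_nonempty_empty
  | @ofStep C _ L₁ _ hL₁ hin₁ _ h0₁ h1₁ ih =>
    cases h₂ with
    | ofEmpty L₂ hL₂ hin₂ =>
      rw [inSet_eq_groundedExt hL₂, ← inSet_eq_groundedExt hL₁] at hin₂
      exact absurd hin₂ hin₁.ne_empty
    | ofStep L₂ _ hL₂ _ hS₂' h0₂ h1₂ =>
      rw [inSet_eq_groundedExt hL₂, ← inSet_eq_groundedExt hL₁] at hS₂' h0₂ h1₂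
      intro a ha
      by_cases hin : a ∈ inSet C L₁
      · rw [h0₁ a hin, h0₂ a hin]
      · rw [h1₁ a ⟨ha, hin⟩, h1₂ a ⟨ha, hin⟩, ih hS₂' ⟨ha, hin⟩]

end Grounded

theorem grounded_stratified_unique_general {α : Type*} (att : α → α → Prop)
    (S₁ S₂ : α → ℕ∞)
    (h₁ : Stratified Sem.grounded att Set.univ S₁)
    (h₂ : Stratified Sem.grounded att Set.univ S₂) :
    S₁ = S₂ :=
  Set.eqOn_univ _ _ |>.1 (h₁.eqOn_of_grounded h₂)

/-- The grounded-stratified labeling of a finite abstract argumentation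
framework is unique. -/
theorem grounded_stratified_unique {α : Type*} [Fintype α] (att : α → α → Prop)
    (S₁ S₂ : α → ℕ∞)
    (h₁ : Stratified Sem.grounded att Set.univ S₁)
    (h₂ : Stratified Sem.grounded att Set.univ S₂) :
    S₁ = S₂ :=
  grounded_stratified_unique_general att S₁ S₂ h₁ h₂
end

section
/- Every stable-stratified labeling S of a finite abstract argumentation framework AF is finite, i.e., ∞ is not in the image of S. -/
/-! Each stratification step removes the nonempty `in`-set of a stable labeling and raises
the remaining levels by one. The layer of level `∞` can only come from a stable labeling
with no `in` argument, and such a labeling lives on the empty framework: an `out` argument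
needs an `in` attacker, and a stable labeling has no `undec` argument. -/

theorem SemLab.stable_eq_empty_of_inSet_eq_empty {α : Type*} {att : α → α → Prop}
    {C : Set α} {L : α → Lab} (hL : SemLab Sem.stable att C L) (hin : inSet C L = ∅) :
    C = ∅ := by
  obtain ⟨⟨hout, -, -⟩, hundec⟩ := hL
  refine Set.eq_empty_of_forall_notMem fun a ha => ?_
  have notMem_inSet {b : α} (hb : b ∈ C) (hbin : L b = Lab.argIn) : False :=
    hin.subset ⟨hb, hbin⟩
  cases hLa : L a with
  | argIn => exact notMem_inSet ha hLa
  | argOut =>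
    obtain ⟨b, hb, hbin, -⟩ := hout a ha hLa
    exact notMem_inSet hb hbin
  | argUndec => exact hundec.subset ⟨ha, hLa⟩

theorem Stratified.stable_ne_top {α : Type*} {att : α → α → Prop} {C : Set α}
    {S : α → ℕ∞} (hS : Stratified Sem.stable att C S) : ∀ a ∈ C, S a ≠ ⊤ := by
  induction hS with
  | ofEmpty L hL hin _ =>
    rw [hL.stable_eq_empty_of_inSet_eq_empty hin]
    exact fun a ha => ha.elim
  | @ofStep C S L S' _ _ _ h0 h1 ih =>
    intro a ha
    by_cases hLa : L a = Lab.argIn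
    · simp [h0 a ⟨ha, hLa⟩]
    · have ha' : a ∈ C \ inSet C L := ⟨ha, fun h => hLa h.2⟩
      rw [h1 a ha']
      exact WithTop.add_ne_top.mpr ⟨WithTop.one_ne_top, ih a ha'⟩

theorem stable_stratified_finite_general {α : Type*} (att : α → α → Prop)
    (S : α → ℕ∞) (hS : Stratified Sem.stable att Set.univ S) :
    ∀ A : α, S A ≠ ⊤ :=
  fun A => hS.stable_ne_top A (Set.mem_univ A)

/-- Every stable-stratified labeling of a finite abstract argumentation
framework is finite, i.e., `∞` is not in its image. -/
theorem stable_stratified_finite {α : Type*} [Fintype α] (att : α → α → Prop)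
    (S : α → ℕ∞) (hS : Stratified Sem.stable att Set.univ S) :
    ∀ A : α, S A ≠ ⊤ :=
  stable_stratified_finite_general att S hS
end

section
/- Let σ be one of the semantics complete, grounded, preferred, stable, or semi-stable, and let S be a σ-stratified labeling of a finite abstract argumentation framework AF = (Ar, att). Then: (a) the set of finite values attained by S is either empty or equals {0, 1, …, k} for some k ∈ ℕ (an initial segment of ℕ); (b) for every finite value i attained by S, the subframework AF|{A ∈ Ar : S(A) ≥ i} admits a σ-labeling L_i with in(L_i) = {A ∈ Ar : S(A) = i}; and (c) the subframework AF|{A ∈ Ar : S(A) = ∞} admits a σ-labeling whose in-set is empty. -/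
lemma Nat.exists_eq_Iic_of_succ_mem_iff {T T' : Set ℕ} (h0 : 0 ∈ T)
    (hsucc : ∀ n, n + 1 ∈ T ↔ n ∈ T') (hT' : T' = ∅ ∨ ∃ k, T' = Set.Iic k) :
    ∃ k, T = Set.Iic k := by
  rcases hT' with rfl | ⟨k, rfl⟩
  · exact ⟨0, by ext (_ | n) <;> simp [h0, hsucc]⟩
  · exact ⟨k + 1, by ext (_ | n) <;> simp [h0, hsucc]⟩

section Shift

variable {α : Type*} {C I : Set α} {S S' : α → ℕ∞}
  (h0 : ∀ a ∈ I, S a = 0) (h1 : ∀ a ∈ C \ I, S a = 1 + S' a)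
include h0 h1

lemma sep_eq_sep_diff_of_shift {p : ℕ∞ → Prop} (hp : ¬ p 0) :
    {a ∈ C | p (S a)} = {a ∈ C \ I | p (1 + S' a)} := by
  ext a
  by_cases ha : a ∈ I
  · simp [ha, h0 a ha, hp]
  · simp only [Set.mem_ofPred_eq, Set.mem_sdiff, ha, not_false_eq_true, and_true]
    exact and_congr_right fun hC => by rw [h1 a ⟨hC, ha⟩]

lemma sep_eq_zero_of_shift (hI : I ⊆ C) : {a ∈ C | S a = 0} = I := by
  ext a
  refine ⟨fun ⟨hC, hSa⟩ => ?_, fun ha => ⟨hI ha, h0 a ha⟩⟩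
  by_contra ha
  simp [h1 a ⟨hC, ha⟩] at hSa

lemma sep_succ_le_of_shift (j : ℕ) :
    {a ∈ C | ((j + 1 : ℕ) : ℕ∞) ≤ S a} = {a ∈ C \ I | (j : ℕ∞) ≤ S' a} :=
  (sep_eq_sep_diff_of_shift h0 h1 (by simp)).trans (by simp [add_comm])

lemma sep_eq_succ_of_shift (j : ℕ) :
    {a ∈ C | S a = ((j + 1 : ℕ) : ℕ∞)} = {a ∈ C \ I | S' a = j} :=
  (sep_eq_sep_diff_of_shift h0 h1 (p := (· = ((j + 1 : ℕ) : ℕ∞)))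
    (by exact_mod_cast j.succ_ne_zero.symm)).trans (by simp [add_comm])

lemma sep_eq_top_of_shift : {a ∈ C | S a = ⊤} = {a ∈ C \ I | S' a = ⊤} :=
  (sep_eq_sep_diff_of_shift h0 h1 (p := (· = ⊤)) (by simp)).trans (by simp)

lemma exists_eq_succ_iff_of_shift (j : ℕ) :
    (∃ a ∈ C, S a = ((j + 1 : ℕ) : ℕ∞)) ↔ ∃ a ∈ C \ I, S' a = j := by
  simpa [Set.Nonempty] using congrArg Set.Nonempty (sep_eq_succ_of_shift h0 h1 j)

end Shift

namespace Stratified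

variable {α : Type*} {σ : Sem} {att : α → α → Prop} {C : Set α} {S : α → ℕ∞}

theorem levels_eq_empty_or_Iic (hS : Stratified σ att C S) :
    {n : ℕ | ∃ a ∈ C, S a = n} = ∅ ∨ ∃ k, {n : ℕ | ∃ a ∈ C, S a = n} = Set.Iic k := by
  induction hS with
  | ofEmpty _ _ _ hS =>
    left
    ext n
    simp +contextual [hS]
  | ofStep _ _ _ hin _ h0 h1 ih =>
    obtain ⟨a, ha⟩ := hin
    exact Or.inr <| Nat.exists_eq_Iic_of_succ_mem_iff ⟨a, ha.1, h0 a ha⟩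
      (exists_eq_succ_iff_of_shift h0 h1) ih

theorem exists_semLab_level (hS : Stratified σ att C S) (i : ℕ) (hi : ∃ a ∈ C, S a = i) :
    ∃ L, SemLab σ att {a ∈ C | i ≤ S a} L ∧ inSet {a ∈ C | i ≤ S a} L = {a ∈ C | S a = i} := by
  induction hS generalizing i with
  | ofEmpty _ _ _ hS =>
    obtain ⟨a, ha, hSa⟩ := hi
    simp [hS a ha] at hSa
  | ofStep L _ hL _ _ h0 h1 ih =>
    cases i with
    | zero =>
      simp only [Nat.cast_zero, zero_le, Set.sep_true, sep_eq_zero_of_shift h0 h1 fun _ ha => ha.1]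
      exact ⟨L, hL, rfl⟩
    | succ j =>
      rw [sep_succ_le_of_shift h0 h1, sep_eq_succ_of_shift h0 h1]
      exact ih j ((exists_eq_succ_iff_of_shift h0 h1 j).mp hi)

theorem exists_semLab_top (hS : Stratified σ att C S) :
    ∃ L, SemLab σ att {a ∈ C | S a = ⊤} L ∧ inSet {a ∈ C | S a = ⊤} L = ∅ := by
  induction hS with
  | ofEmpty L hL hin hS =>
    rw [Set.sep_eq_self_iff_mem_true.mpr hS]
    exact ⟨L, hL, hin⟩
  | ofStep _ _ _ _ _ h0 h1 ih =>
    rwa [sep_eq_top_of_shift h0 h1]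

end Stratified

theorem stratified_characterization_general {α : Type*} (att : α → α → Prop)
    (σ : Sem) (S : α → ℕ∞) (hS : Stratified σ att Set.univ S) :
    ({n : ℕ | ∃ A : α, S A = (n : ℕ∞)} = ∅ ∨
      ∃ k : ℕ, {n : ℕ | ∃ A : α, S A = (n : ℕ∞)} = Set.Iic k) ∧
    (∀ i : ℕ, (∃ A : α, S A = (i : ℕ∞)) →
      ∃ L : α → Lab, SemLab σ att {A : α | (i : ℕ∞) ≤ S A} L ∧
        inSet {A : α | (i : ℕ∞) ≤ S A} L = {A : α | S A = (i : ℕ∞)}) ∧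
    (∃ L : α → Lab, SemLab σ att {A : α | S A = ⊤} L ∧
      inSet {A : α | S A = ⊤} L = ∅) := by
  refine ⟨by simpa using hS.levels_eq_empty_or_Iic, fun i hi => ?_, ?_⟩
  · simpa [Set.sep_univ] using hS.exists_semLab_level i (by simpa using hi)
  · simpa [Set.sep_univ] using hS.exists_semLab_top

/-- Characterization of `σ`-stratified labelings:
(a) the set of finite values attained by `S` is empty or an initial segment `{0,…,k}` of ℕ;
(b) for every finite value `i` attained by `S`, the subframework on `{A | S A ≥ i}` admits a
`σ`-labeling whose in-set equals `{A | S A = i}`;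
(c) the subframework on `{A | S A = ∞}` admits a `σ`-labeling whose in-set is empty. -/
theorem stratified_characterization {α : Type*} [Fintype α] (att : α → α → Prop)
    (σ : Sem) (S : α → ℕ∞) (hS : Stratified σ att Set.univ S) :
    ({n : ℕ | ∃ A : α, S A = (n : ℕ∞)} = ∅ ∨
      ∃ k : ℕ, {n : ℕ | ∃ A : α, S A = (n : ℕ∞)} = Set.Iic k) ∧
    (∀ i : ℕ, (∃ A : α, S A = (i : ℕ∞)) →
      ∃ L : α → Lab, SemLab σ att {A : α | (i : ℕ∞) ≤ S A} L ∧
        inSet {A : α | (i : ℕ∞) ≤ S A} L = {A : α | S A = (i : ℕ∞)}) ∧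
    (∃ L : α → Lab, SemLab σ att {A : α | S A = ⊤} L ∧
      inSet {A : α | S A = ⊤} L = ∅) :=
  stratified_characterization_general att σ S hS
end

section
/- Let At be a finite set of propositional atoms and let Δ be a consistent finite knowledge base of conditionals over At. Let AF be the ≺^Δ_Z-induced argumentation framework of Δ, whose arguments are the propositional interpretations Ω of At and where ω1 attacks ω2 if and only if ω1 ≺^Δ_Z ω2. Then the System Z ranking function κ^z_Δ coincides with the grounded-stratified labeling S^gr_AF of AF, i.e., κ^z_Δ(ω) = S^gr_AF(ω) for every ω ∈ Ω. -/
/-- Propositional formulas over a set of atoms. -/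
inductive PropForm (At : Type) : Type where
  | atom : At → PropForm At
  | fls : PropForm At
  | neg : PropForm At → PropForm At
  | conj : PropForm At → PropForm At → PropForm At
  | disj : PropForm At → PropForm At → PropForm At
  deriving DecidableEq

/-- Evaluation of a propositional formula in an interpretation `ω : At → Bool`. -/
def PropForm.eval {At : Type} (ω : At → Bool) : PropForm At → Bool
  | PropForm.atom a => ω a
  | PropForm.fls => false
  | PropForm.neg φ => !(φ.eval ω)
  | PropForm.conj φ ψ => φ.eval ω && ψ.eval ω
  | PropForm.disj φ ψ => φ.eval ω || ψ.eval ω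

/-- A conditional `(φ|ψ)` with conclusion `φ = conc` and premise `ψ = prem`. -/
structure Cond (At : Type) : Type where
  conc : PropForm At
  prem : PropForm At
  deriving DecidableEq

/-- `ω` verifies `(φ|ψ)` iff `ω ⊨ φ ∧ ψ`. -/
def Verifies {At : Type} (ω : At → Bool) (δ : Cond At) : Prop :=
  δ.conc.eval ω = true ∧ δ.prem.eval ω = true

/-- `ω` falsifies `(φ|ψ)` iff `ω ⊨ ¬φ ∧ ψ`. -/
def Falsifies {At : Type} (ω : At → Bool) (δ : Cond At) : Prop :=
  δ.conc.eval ω = false ∧ δ.prem.eval ω = true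

/-- `ω` satisfies the knowledge base `Δ` iff it satisfies (does not falsify) every
conditional in `Δ`. -/
def SatKB {At : Type} (ω : At → Bool) (Δ : Finset (Cond At)) : Prop :=
  ∀ δ ∈ Δ, ¬ Falsifies ω δ

/-- A ranking function `κ` accepts `(φ|ψ)` iff `κ(φ ∧ ψ) < κ(¬φ ∧ ψ)`, where
`κ` of a formula is the minimum of `κ` over its models (`∞` if there are none). -/
def Accepts {At : Type} (κ : (At → Bool) → ℕ∞) (δ : Cond At) : Prop :=
  (⨅ (ω : At → Bool) (_ : Verifies ω δ), κ ω) <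
    ⨅ (ω : At → Bool) (_ : Falsifies ω δ), κ ω

/-- `Δ` is consistent iff some ranking function (a map to `ℕ ∪ {∞}` attaining `0`)
accepts every conditional in `Δ`. -/
def ConsistentKB {At : Type} (Δ : Finset (Cond At)) : Prop :=
  ∃ κ : (At → Bool) → ℕ∞, (∃ ω : At → Bool, κ ω = 0) ∧ ∀ δ ∈ Δ, Accepts κ δ

/-- `δ` is tolerated by `Δ` iff some interpretation verifies `δ` and satisfies `Δ`. -/
def Tolerated {At : Type} (Δ : Finset (Cond At)) (δ : Cond At) : Prop :=
  ∃ ω : At → Bool, Verifies ω δ ∧ ∀ δ' ∈ Δ, ¬ Falsifies ω δ'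

open Classical in
/-- The rest of `Δ` after `n` rounds of the Z-partitioning: `ZRest Δ n` is
`Δ \ (Δ₀ ∪ … ∪ Δₙ₋₁)`, so the `i`-th Z-partition class is
`Δᵢ = {δ ∈ ZRest Δ i | δ tolerated by ZRest Δ i} = ZRest Δ i \ ZRest Δ (i+1)`. -/
noncomputable def ZRest {At : Type} (Δ : Finset (Cond At)) : ℕ → Finset (Cond At)
  | 0 => Δ
  | n + 1 => (ZRest Δ n).filter (fun δ => ¬ Tolerated (ZRest Δ n) δ)

/-- The Z-rank `Z_Δ(δ)`: the index `i` of the Z-partition class `Δᵢ` containing `δ`,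
i.e., the largest `i` with `δ ∈ ZRest Δ i` (for consistent `Δ`). -/
noncomputable def Zrank {At : Type} (Δ : Finset (Cond At)) (δ : Cond At) : ℕ :=
  sSup {i : ℕ | δ ∈ ZRest Δ i}

open Classical in
/-- `max {Z_Δ(δ) | ω falsifies δ, δ ∈ Δ}`, with value `⊥` for the empty set. -/
noncomputable def maxFal {At : Type} (Δ : Finset (Cond At)) (ω : At → Bool) : WithBot ℕ :=
  (Δ.filter (fun δ => Falsifies ω δ)).sup (fun δ => (Zrank Δ δ : WithBot ℕ))

open Classical in
/-- The System Z ranking function: `κ^z_Δ(ω) = 0` if `ω` satisfies `Δ`, and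
`κ^z_Δ(ω) = max {Z_Δ(δ) | ω falsifies δ} + 1` otherwise. -/
noncomputable def kappaZ {At : Type} (Δ : Finset (Cond At)) (ω : At → Bool) : ℕ∞ :=
  if SatKB ω Δ then 0
  else (((Δ.filter (fun δ => Falsifies ω δ)).sup (Zrank Δ) : ℕ) : ℕ∞) + 1

/-- The preference relation `ω₁ ≺^Δ_Z ω₂`: either `ω₁` satisfies `Δ` and `ω₂` does not,
or `max {Z_Δ(δ) | ω₁ falsifies δ} < max {Z_Δ(δ) | ω₂ falsifies δ}`. -/
def precZ {At : Type} (Δ : Finset (Cond At)) (ω₁ ω₂ : At → Bool) : Prop :=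
  (SatKB ω₁ Δ ∧ ¬ SatKB ω₂ Δ) ∨ maxFal Δ ω₁ < maxFal Δ ω₂

/-!
With `rankZ Δ ω = max {Z_Δ(δ) + 1 | ω falsifies δ}` (so `κ^z_Δ = rankZ Δ`), `ω₁` attacks `ω₂`
exactly when `rankZ Δ ω₁ < rankZ Δ ω₂`. Consistency makes the values of `rankZ Δ` an initial
segment of `ℕ`: a world verifying a conditional of `Δₖ₊₁` that satisfies `Δₖ₊₁ ∪ Δₖ₊₂ ∪ …` has
rank exactly `k + 1`. In any such framework, the arguments labelled `in` by a complete labeling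
are exactly those of least rank, so peeling them off lowers every remaining rank by one, and the
stratified labeling is the rank itself.
-/

section Ranking

variable {At : Type} {κ : (At → Bool) → ℕ∞} {δ : Cond At} {Δ Γ : Finset (Cond At)}

theorem Accepts.exists_verifies_lt (h : Accepts κ δ) {ω : At → Bool} (hω : Falsifies ω δ) :
    ∃ ω', Verifies ω' δ ∧ κ ω' < κ ω := by
  simpa only [iInf_lt_iff, exists_prop] using h.trans_le (iInf₂_le ω hω)

theorem ConsistentKB.exists_satKB (hcons : ConsistentKB Δ) : ∃ ω, SatKB ω Δ := by
  obtain ⟨κ, ⟨ω, hω⟩, hacc⟩ := hcons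
  refine ⟨ω, fun δ hδ hfal => ?_⟩
  obtain ⟨_, -, hlt⟩ := (hacc δ hδ).exists_verifies_lt hfal
  exact not_lt_zero (hω ▸ hlt)

theorem ConsistentKB.exists_tolerated [Finite At] (hcons : ConsistentKB Δ) (hΓ : Γ ⊆ Δ)
    (hne : Γ.Nonempty) : ∃ δ ∈ Γ, Tolerated Γ δ := by
  obtain ⟨κ, -, hacc⟩ := hcons
  have hver : {ω | ∃ δ ∈ Γ, Verifies ω δ}.Nonempty := by
    obtain ⟨δ, hδ⟩ := hne
    have := (hacc δ (hΓ hδ)).trans_le le_top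
    simp only [iInf_lt_iff, exists_prop] at this
    obtain ⟨ω, hω, -⟩ := this
    exact ⟨ω, δ, hδ, hω⟩
  -- A `κ`-least world verifying some conditional of `Γ` can falsify none of them.
  obtain ⟨ω, ⟨δ, hδ, hωδ⟩, hmin⟩ := Set.exists_min_image _ κ (Set.toFinite _) hver
  refine ⟨δ, hδ, ω, hωδ, fun δ' hδ' hfal => ?_⟩
  obtain ⟨ω', hω', hlt⟩ := (hacc δ' (hΓ hδ')).exists_verifies_lt hfal
  exact (hmin ω' ⟨δ', hδ', hω'⟩).not_gt hlt

end Ranking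

section ZPartition

variable {At : Type} {Δ : Finset (Cond At)} {δ : Cond At} {i n : ℕ}

open Classical in
theorem mem_ZRest_succ :
    δ ∈ ZRest Δ (n + 1) ↔ δ ∈ ZRest Δ n ∧ ¬ Tolerated (ZRest Δ n) δ := by
  rw [ZRest]
  exact Finset.mem_filter

theorem ZRest_antitone : Antitone (ZRest Δ) :=
  antitone_nat_of_succ_le fun _ _ h => (mem_ZRest_succ.1 h).1

theorem ZRest_subset (n : ℕ) : ZRest Δ n ⊆ Δ :=
  ZRest_antitone (Nat.zero_le n)

theorem ConsistentKB.card_ZRest_le [Finite At] (hcons : ConsistentKB Δ) (n : ℕ) :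
    (ZRest Δ n).card ≤ Δ.card - n := by
  induction n with
  | zero => rfl
  | succ n ih =>
    obtain hempty | hne := (ZRest Δ n).eq_empty_or_nonempty
    · simp [ZRest, hempty]
    obtain ⟨δ, hδ, htol⟩ := hcons.exists_tolerated (ZRest_subset n) hne
    have hssub : ZRest Δ (n + 1) ⊂ ZRest Δ n :=
      (Finset.ssubset_iff_of_subset (ZRest_antitone n.le_succ)).2
        ⟨δ, hδ, fun h => (mem_ZRest_succ.1 h).2 htol⟩
    have := Finset.card_lt_card hssub
    omega

theorem ConsistentKB.lt_card_of_mem_ZRest [Finite At] (hcons : ConsistentKB Δ)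
    (h : δ ∈ ZRest Δ i) : i < Δ.card := by
  have := Finset.card_pos.2 ⟨δ, h⟩
  have := hcons.card_ZRest_le i
  omega

theorem ConsistentKB.mem_ZRest_iff [Finite At] (hcons : ConsistentKB Δ) :
    δ ∈ ZRest Δ i ↔ δ ∈ Δ ∧ i ≤ Zrank Δ δ := by
  have hbdd : BddAbove {i | δ ∈ ZRest Δ i} :=
    ⟨Δ.card, fun _ hj => (hcons.lt_card_of_mem_ZRest hj).le⟩
  exact ⟨fun h => ⟨ZRest_subset i h, le_csSup hbdd h⟩,
    fun ⟨hδ, hi⟩ => ZRest_antitone hi (Nat.sSup_mem ⟨0, hδ⟩ hbdd)⟩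

end ZPartition

open Classical in
noncomputable def rankZ {At : Type} (Δ : Finset (Cond At)) (ω : At → Bool) : ℕ :=
  (Δ.filter (Falsifies ω)).sup fun δ => Zrank Δ δ + 1

section RankZ

open Classical

variable {At : Type} {Δ : Finset (Cond At)} {ω ω₁ ω₂ : At → Bool} {n r : ℕ}

theorem rankZ_eq_zero_iff : rankZ Δ ω = 0 ↔ SatKB ω Δ := by
  simp [rankZ, SatKB]

theorem kappaZ_eq_rankZ : kappaZ Δ ω = rankZ Δ ω := by
  unfold kappaZ
  split_ifs with h
  · rw [rankZ_eq_zero_iff.2 h, Nat.cast_zero]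
  · have hne : (Δ.filter (Falsifies ω)).Nonempty := by
      simpa [SatKB, Finset.filter_nonempty_iff] using h
    rw [rankZ, ← Finset.sup_add hne]
    push_cast
    rfl

theorem maxFal_eq_bot_iff : maxFal Δ ω = ⊥ ↔ SatKB ω Δ := by
  simp [maxFal, Finset.sup_eq_bot_iff, SatKB]

theorem maxFal_add_one (h : ¬ SatKB ω Δ) : maxFal Δ ω + 1 = rankZ Δ ω := by
  have hne : (Δ.filter (Falsifies ω)).Nonempty := by
    simpa [SatKB, Finset.filter_nonempty_iff] using h
  rw [maxFal, rankZ, ← Finset.sup_add hne, Nat.cast_add, Nat.cast_one, Nat.cast_withBot,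
    Finset.coe_sup_of_nonempty hne]
  rfl

theorem precZ_iff : precZ Δ ω₁ ω₂ ↔ rankZ Δ ω₁ < rankZ Δ ω₂ := by
  by_cases h₁ : SatKB ω₁ Δ <;> by_cases h₂ : SatKB ω₂ Δ
  · simp [precZ, h₁, h₂, rankZ_eq_zero_iff.2, maxFal_eq_bot_iff.2]
  · simp [precZ, h₁, h₂, rankZ_eq_zero_iff.2, Nat.pos_iff_ne_zero, rankZ_eq_zero_iff]
  · simp [precZ, h₁, h₂, rankZ_eq_zero_iff.2, maxFal_eq_bot_iff.2]
  · rw [precZ, ← WithBot.add_lt_add_iff_right WithBot.one_ne_bot, maxFal_add_one h₁,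
      maxFal_add_one h₂]
    simp [h₁, h₂]

theorem ConsistentKB.rankZ_le_iff [Finite At] (hcons : ConsistentKB Δ) :
    rankZ Δ ω ≤ r ↔ SatKB ω (ZRest Δ r) := by
  simp only [rankZ, Finset.sup_le_iff, Finset.mem_filter, SatKB, hcons.mem_ZRest_iff, and_imp,
    Nat.add_one_le_iff, ← not_le]
  exact forall₂_congr fun _ _ => imp_not_comm

theorem ConsistentKB.exists_rankZ_eq_succ [Finite At] (hcons : ConsistentKB Δ)
    (h : (ZRest Δ (n + 1)).Nonempty) : ∃ ω, rankZ Δ ω = n + 1 := by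
  obtain ⟨δ, hδ, ω, hver, hsat⟩ := hcons.exists_tolerated (ZRest_subset _) h
  have hle : rankZ Δ ω ≤ n + 1 := hcons.rankZ_le_iff.2 hsat
  have hgt : ¬ rankZ Δ ω ≤ n := fun hn =>
    (mem_ZRest_succ.1 hδ).2 ⟨ω, hver, hcons.rankZ_le_iff.1 hn⟩
  exact ⟨ω, by omega⟩

theorem ConsistentKB.exists_rankZ_eq_of_le [Finite At] (hcons : ConsistentKB Δ)
    (h : n ≤ rankZ Δ ω) : ∃ ω', rankZ Δ ω' = n := by
  obtain rfl | hlt := h.eq_or_lt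
  · exact ⟨ω, rfl⟩
  cases n with
  | zero =>
    obtain ⟨ω', hω'⟩ := hcons.exists_satKB
    exact ⟨ω', rankZ_eq_zero_iff.2 hω'⟩
  | succ n =>
    refine hcons.exists_rankZ_eq_succ (Finset.nonempty_iff_ne_empty.2 fun hempty => ?_)
    have : rankZ Δ ω ≤ n + 1 := hcons.rankZ_le_iff.2 (by simp [SatKB, hempty])
    omega

end RankZ

section RankAttack

variable {α : Type*} {f : α → ℕ}

theorem IsCompleteLab.inSet_eq_of_attack_lt {n : ℕ} {L : α → Lab}
    (hL : IsCompleteLab (fun a b => f a < f b) {a | n ≤ f a} L)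
    (hf : ∀ a, Set.Iic (f a) ⊆ Set.range f) :
    inSet {a | n ≤ f a} L = {a | f a = n} := by
  obtain ⟨hout, hin, hundec⟩ := hL
  have unattacked_in : ∀ a, f a = n → L a = Lab.argIn := by
    intro a ha
    cases hLa : L a with
    | argIn => rfl
    | argOut =>
      obtain ⟨b, hb, -, hba⟩ := hout a ha.ge hLa
      exact ((hba.trans_eq ha).not_ge hb).elim
    | argUndec =>
      obtain ⟨-, b, hb, hba, -⟩ := hundec a ha.ge hLa
      exact ((hba.trans_eq ha).not_ge hb).elim
  ext a
  refine ⟨fun ⟨ha, hLa⟩ => ?_, fun ha => ⟨ha.ge, unattacked_in a ha⟩⟩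
  obtain ⟨b, hb⟩ := hf a ha
  by_contra hne
  have hbout := hin a ha hLa b hb.ge (hb.trans_lt (lt_of_le_of_ne ha (Ne.symm hne)))
  rw [unattacked_in b hb] at hbout
  cases hbout

theorem Stratified.add_eq_of_attack_lt (hf : ∀ a, Set.Iic (f a) ⊆ Set.range f) {C : Set α}
    {S : α → ℕ∞} (hS : Stratified Sem.grounded (fun a b => f a < f b) C S) :
    ∀ n : ℕ, C = {a | n ≤ f a} → ∀ a ∈ C, n + S a = f a := by
  induction hS with
  | ofEmpty L hL hin _ =>
    rintro n rfl a ha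
    obtain ⟨b, hb⟩ := hf a ha
    have : b ∈ inSet {a | n ≤ f a} L := by rw [hL.1.inSet_eq_of_attack_lt hf]; exact hb
    simp [hin] at this
  | ofStep L S' hL _ _ h0 h1 ih =>
    rintro n rfl a ha
    have hin := hL.1.inSet_eq_of_attack_lt hf
    have hrest : {a | n ≤ f a} \ inSet {a | n ≤ f a} L = {a | n + 1 ≤ f a} := by
      rw [hin]
      ext
      simp only [Set.mem_sdiff, Set.mem_ofPred_eq]
      omega
    by_cases han : f a = n
    · rw [h0 a (hin ▸ han), add_zero, han]
    · have had : a ∈ {a | n ≤ f a} \ inSet {a | n ≤ f a} L := ⟨ha, by rw [hin]; exact han⟩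
      rw [h1 a had, ← add_assoc, ← ih (n + 1) hrest a had]
      push_cast
      rfl

theorem Stratified.eq_of_attack_lt (hf : ∀ a, Set.Iic (f a) ⊆ Set.range f) {S : α → ℕ∞}
    (hS : Stratified Sem.grounded (fun a b => f a < f b) Set.univ S) (a : α) : S a = f a := by
  simpa using hS.add_eq_of_attack_lt hf 0 (by simp) a (Set.mem_univ a)

end RankAttack

theorem systemZ_eq_grounded_stratified_general {At : Type} [Fintype At]
    (Δ : Finset (Cond At)) (hcons : ConsistentKB Δ)
    (S : (At → Bool) → ℕ∞)
    (hS : Stratified Sem.grounded (precZ Δ) Set.univ S) :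
    ∀ ω : At → Bool, S ω = kappaZ Δ ω := by
  have hatt : precZ Δ = fun ω₁ ω₂ => rankZ Δ ω₁ < rankZ Δ ω₂ := by
    ext
    exact precZ_iff
  rw [hatt] at hS
  intro ω
  rw [kappaZ_eq_rankZ]
  exact hS.eq_of_attack_lt (fun _ _ hm => hcons.exists_rankZ_eq_of_le hm) ω

/-- For a consistent knowledge base `Δ` over finitely many atoms, the
System Z ranking function `κ^z_Δ` coincides with the grounded-stratified labeling of the
`≺^Δ_Z`-induced argumentation framework, whose arguments are the interpretations and
where `ω₁` attacks `ω₂` iff `ω₁ ≺^Δ_Z ω₂`. -/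
theorem systemZ_eq_grounded_stratified {At : Type} [DecidableEq At] [Fintype At]
    (Δ : Finset (Cond At)) (hcons : ConsistentKB Δ)
    (S : (At → Bool) → ℕ∞)
    (hS : Stratified Sem.grounded (precZ Δ) Set.univ S) :
    ∀ ω : At → Bool, S ω = kappaZ Δ ω :=
  systemZ_eq_grounded_stratified_general Δ hcons S hS
end

section
/- Let σ be one of the semantics complete, grounded, preferred, stable, or semi-stable, let AF1 = (Ar1, att1) and AF2 = (Ar2, att2) be finite abstract argumentation frameworks, and let φ : Ar1 → Ar2 be an isomorphism from AF1 to AF2. Then S is a σ-stratified labeling of AF1 if and only if S ∘ φ⁻¹ is a σ-stratified labeling of AF2; in particular, the map S ↦ S ∘ φ⁻¹ is a bijection between the σ-stratified labelings of AF1 and those of AF2 (so the ordinal σ-stratified semantics satisfies Abstraction*). -/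
lemma inSet_comp {α β : Type*} (e : α ≃ β) (C : Set α) (L : α → Lab) :
    inSet (e '' C) (L ∘ e.symm) = e '' inSet C L := by
  ext b
  simp [inSet, Set.mem_image_equiv]

lemma undecSet_comp {α β : Type*} (e : α ≃ β) (C : Set α) (L : α → Lab) :
    undecSet (e '' C) (L ∘ e.symm) = e '' undecSet C L := by
  ext b
  simp [undecSet, Set.mem_image_equiv]

lemma complete_comp {α β : Type*} {att₁ : α → α → Prop} {att₂ : β → β → Prop}
    (e : α ≃ β) (he : ∀ A B : α, att₁ A B ↔ att₂ (e A) (e B))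
    {C : Set α} {L : α → Lab} (h : IsCompleteLab att₁ C L) :
    IsCompleteLab att₂ (e '' C) (L ∘ e.symm) := by
  obtain ⟨h1, h2, h3⟩ := h
  refine ⟨?_, ?_, ?_⟩
  · rintro a ha hout
    rw [Set.mem_image_equiv] at ha
    obtain ⟨b, hb, hbin, hatt⟩ := h1 _ ha hout
    exact ⟨e b, Set.mem_image_of_mem e hb, by simpa using hbin,
      by have := (he b (e.symm a)).mp hatt; simpa using this⟩
  · rintro a ha hin b hb hatt
    rw [Set.mem_image_equiv] at ha hb
    refine h2 _ ha hin _ hb ?_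
    have := (he (e.symm b) (e.symm a)).mpr
    simp at this
    exact this hatt
  · rintro a ha hund
    rw [Set.mem_image_equiv] at ha
    obtain ⟨hA, b, hb, hatt, hnot⟩ := h3 _ ha hund
    constructor
    · rintro c hc hattc
      rw [Set.mem_image_equiv] at hc
      refine hA _ hc ?_
      have := (he (e.symm c) (e.symm a)).mpr
      simp at this
      exact this hattc
    · exact ⟨e b, Set.mem_image_of_mem e hb,
        by have := (he b (e.symm a)).mp hatt; simpa using this,
        by simpa using hnot⟩
lemma he_symm {α β : Type*} {att₁ : α → α → Prop} {att₂ : β → β → Prop}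
    (e : α ≃ β) (he : ∀ A B : α, att₁ A B ↔ att₂ (e A) (e B)) :
    ∀ A B : β, att₂ A B ↔ att₁ (e.symm A) (e.symm B) := by
  intro A B
  have := he (e.symm A) (e.symm B)
  simpa using this.symm

lemma complete_back {α β : Type*} {att₁ : α → α → Prop} {att₂ : β → β → Prop}
    (e : α ≃ β) (he : ∀ A B : α, att₁ A B ↔ att₂ (e A) (e B))
    {C : Set α} {L' : β → Lab} (h : IsCompleteLab att₂ (e '' C) L') :
    IsCompleteLab att₁ C (L' ∘ e) := by
  have := complete_comp e.symm (he_symm e he) h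
  simpa [Set.image_image] using this

lemma inSet_back {α β : Type*} (e : α ≃ β) (C : Set α) (L' : β → Lab) :
    inSet (e '' C) L' = e '' inSet C (L' ∘ e) := by
  have := inSet_comp e C (L' ∘ e)
  simpa [Function.comp_def] using this

lemma undecSet_back {α β : Type*} (e : α ≃ β) (C : Set α) (L' : β → Lab) :
    undecSet (e '' C) L' = e '' undecSet C (L' ∘ e) := by
  have := undecSet_comp e C (L' ∘ e)
  simpa [Function.comp_def] using this

lemma semlab_comp {α β : Type*} {att₁ : α → α → Prop} {att₂ : β → β → Prop}
    (σ : Sem) (e : α ≃ β) (he : ∀ A B : α, att₁ A B ↔ att₂ (e A) (e B))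
    {C : Set α} {L : α → Lab} (h : SemLab σ att₁ C L) :
    SemLab σ att₂ (e '' C) (L ∘ e.symm) := by
  cases σ with
  | complete => exact complete_comp e he h
  | grounded =>
    obtain ⟨h1, h2⟩ := h
    refine ⟨complete_comp e he h1, fun L' hL' hsub => ?_⟩
    rw [inSet_comp, inSet_back e C L'] at hsub ⊢
    rw [Set.image_subset_image_iff e.injective] at hsub ⊢
    exact h2 _ (complete_back e he hL') hsub
  | preferred =>
    obtain ⟨h1, h2⟩ := h
    refine ⟨complete_comp e he h1, fun L' hL' hsub => ?_⟩
    rw [inSet_comp, inSet_back e C L'] at hsub ⊢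
    rw [Set.image_subset_image_iff e.injective] at hsub ⊢
    exact h2 _ (complete_back e he hL') hsub
  | stable =>
    obtain ⟨h1, h2⟩ := h
    refine ⟨complete_comp e he h1, ?_⟩
    rw [undecSet_comp, h2, Set.image_empty]
  | semiStable =>
    obtain ⟨h1, h2⟩ := h
    refine ⟨complete_comp e he h1, fun L' hL' hsub => ?_⟩
    rw [undecSet_comp, undecSet_back e C L'] at hsub ⊢
    rw [Set.image_subset_image_iff e.injective] at hsub ⊢
    exact h2 _ (complete_back e he hL') hsub

lemma strat_comp {α β : Type*} {att₁ : α → α → Prop} {att₂ : β → β → Prop}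
    (σ : Sem) (e : α ≃ β) (he : ∀ A B : α, att₁ A B ↔ att₂ (e A) (e B))
    {C : Set α} {S : α → ℕ∞} (h : Stratified σ att₁ C S) :
    Stratified σ att₂ (e '' C) (S ∘ e.symm) := by
  induction h with
  | ofEmpty L hL hin hS =>
    refine Stratified.ofEmpty (L ∘ e.symm) (semlab_comp σ e he hL) ?_ ?_
    · rw [inSet_comp, hin, Set.image_empty]
    · rintro b hb
      rw [Set.mem_image_equiv] at hb
      exact hS _ hb
  | @ofStep C S L S' hL hin hS' h0 h1 ih =>
    refine Stratified.ofStep (L ∘ e.symm) (S' ∘ e.symm) (semlab_comp σ e he hL)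
      (by rw [inSet_comp]; exact hin.image e) ?_ ?_ ?_
    · rw [inSet_comp, ← Set.image_diff e.injective]
      exact ih
    · rw [inSet_comp]
      rintro b hb
      rw [Set.mem_image_equiv] at hb
      exact h0 _ (by simpa using hb)
    · rw [inSet_comp, ← Set.image_diff e.injective]
      rintro b hb
      rw [Set.mem_image_equiv] at hb
      exact h1 _ hb
/-- Abstraction*: For an isomorphism `e` between two finite argumentation
frameworks, `S` is a `σ`-stratified labeling of the first iff `S ∘ e.symm` is one of the
second; in particular `S ↦ S ∘ e.symm` is a bijection between the respective sets of
`σ`-stratified labelings. -/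
theorem stratified_abstraction {α β : Type*} [Fintype α] [Fintype β]
    (att₁ : α → α → Prop) (att₂ : β → β → Prop) (σ : Sem)
    (e : α ≃ β) (he : ∀ A B : α, att₁ A B ↔ att₂ (e A) (e B)) :
    (∀ S : α → ℕ∞,
      Stratified σ att₁ Set.univ S ↔ Stratified σ att₂ Set.univ (S ∘ e.symm)) ∧
    Set.BijOn (fun S : α → ℕ∞ => S ∘ e.symm)
      {S | Stratified σ att₁ Set.univ S} {S | Stratified σ att₂ Set.univ S} := by
  have he' := he_symm e he
  have fwd : ∀ S : α → ℕ∞, Stratified σ att₁ Set.univ S →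
      Stratified σ att₂ Set.univ (S ∘ e.symm) := by
    intro S h
    have := strat_comp σ e he h
    simpa using this
  have bwd : ∀ T : β → ℕ∞, Stratified σ att₂ Set.univ T →
      Stratified σ att₁ Set.univ (T ∘ e) := by
    intro T h
    have := strat_comp σ e.symm he' h
    simpa using this
  have hiff : ∀ S : α → ℕ∞,
      Stratified σ att₁ Set.univ S ↔ Stratified σ att₂ Set.univ (S ∘ e.symm) := by
    intro S
    refine ⟨fwd S, fun h => ?_⟩
    have := bwd _ h
    have hS : (S ∘ e.symm) ∘ e = S := by
      funext a; simp
    rwa [hS] at this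
  refine ⟨hiff, fun S hS => (hiff S).mp hS, ?_, ?_⟩
  · intro S hS T hT h
    funext a
    have := congrFun h (e a)
    simpa using this
  · intro T hT
    refine ⟨T ∘ e, bwd T hT, ?_⟩
    funext b; simp
end

section
/- Let AF = (Ar, att) be an abstract argumentation framework and let B ⊆ Ar be such that there are no attacks between B and its complement Ar \ B in either direction (i.e., for all (A, C) ∈ att, either both A, C ∈ B or both A, C ∈ Ar \ B). Then a function L : Ar → {in, out, undec} is a complete labeling of AF if and only if the restriction of L to B is a complete labeling of AF|B and the restriction of L to Ar \ B is a complete labeling of AF|(Ar \ B). -/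
/-- If there are no attacks between `B` and its complement in either
direction, then `L` is a complete labeling of the whole framework iff its restrictions
to `B` and to the complement of `B` are complete labelings of the respective
subframeworks. -/
theorem complete_labeling_split {α : Type*} (att : α → α → Prop) (B : Set α)
    (hB : ∀ A C : α, att A C → ((A ∈ B ∧ C ∈ B) ∨ (A ∉ B ∧ C ∉ B)))
    (L : α → Lab) :
    IsCompleteLab att Set.univ L ↔
      (IsCompleteLab att B L ∧ IsCompleteLab att Bᶜ L) := by
  constructor
  · rintro ⟨h1, h2, h3⟩
    refine ⟨⟨?_, ?_, ?_⟩, ?_, ?_, ?_⟩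
    · intro a ha hout
      obtain ⟨b, -, hb, hatt⟩ := h1 a trivial hout
      exact ⟨b, ((hB b a hatt).resolve_right (fun h => h.2 ha)).1, hb, hatt⟩
    · intro a ha hin b hb hatt
      exact h2 a trivial hin b trivial hatt
    · intro a ha hu
      obtain ⟨hu1, b, -, hatt, hb⟩ := h3 a trivial hu
      exact ⟨fun b _ hatt => hu1 b trivial hatt,
        b, ((hB b a hatt).resolve_right (fun h => h.2 ha)).1, hatt, hb⟩
    · intro a ha hout
      obtain ⟨b, -, hb, hatt⟩ := h1 a trivial hout
      exact ⟨b, ((hB b a hatt).resolve_left (fun h => ha h.2)).1, hb, hatt⟩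
    · intro a ha hin b hb hatt
      exact h2 a trivial hin b trivial hatt
    · intro a ha hu
      obtain ⟨hu1, b, -, hatt, hb⟩ := h3 a trivial hu
      exact ⟨fun b _ hatt => hu1 b trivial hatt,
        b, ((hB b a hatt).resolve_left (fun h => ha h.2)).1, hatt, hb⟩
  · rintro ⟨⟨h1, h2, h3⟩, g1, g2, g3⟩
    refine ⟨?_, ?_, ?_⟩
    · intro a _ hout
      by_cases ha : a ∈ B
      · obtain ⟨b, hbB, hb, hatt⟩ := h1 a ha hout
        exact ⟨b, trivial, hb, hatt⟩
      · obtain ⟨b, hbB, hb, hatt⟩ := g1 a ha hout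
        exact ⟨b, trivial, hb, hatt⟩
    · intro a _ hin b _ hatt
      rcases hB b a hatt with ⟨hb, ha⟩ | ⟨hb, ha⟩
      · exact h2 a ha hin b hb hatt
      · exact g2 a ha hin b hb hatt
    · intro a _ hu
      by_cases ha : a ∈ B
      · obtain ⟨hu1, b, hbB, hatt, hb⟩ := h3 a ha hu
        exact ⟨fun b _ hatt => hu1 b ((hB b a hatt).resolve_right (fun h => h.2 ha)).1 hatt,
          b, trivial, hatt, hb⟩
      · obtain ⟨hu1, b, hbB, hatt, hb⟩ := g3 a ha hu
        exact ⟨fun b _ hatt => hu1 b ((hB b a hatt).resolve_left (fun h => ha h.2)).1 hatt,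
          b, trivial, hatt, hb⟩
end

section
/- Let σ be one of the semantics complete, grounded, preferred, stable, or semi-stable, and let AF = (Ar, att) be a finite abstract argumentation framework that admits at least one σ-stratified labeling. Let B ⊆ Ar be a union of weakly connected components of AF (i.e., there are no attacks between B and Ar \ B in either direction). Then for every σ-stratified labeling S' of AF|B there exists a σ-stratified labeling S of AF such that for all B1, B2 ∈ B: (i) S'(B1) = S'(B2) iff S(B1) = S(B2), and (ii) S'(B1) ≤ S'(B2) iff S(B1) ≤ S(B2). (The ordinal σ-stratified semantics satisfies Irrelevance*.) -/
section Aux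
variable {α : Type*} {att : α → α → Prop} {C C₁ C₂ : Set α} {L L₁ L₂ : α → Lab}

/-- No attacks in either direction between `C₁` and `C₂`. -/
def AttSep (att : α → α → Prop) (C₁ C₂ : Set α) : Prop :=
  ∀ a ∈ C₁, ∀ b ∈ C₂, ¬ att a b ∧ ¬ att b a

lemma AttSep.symm (h : AttSep att C₁ C₂) : AttSep att C₂ C₁ :=
  fun a ha b hb => ⟨(h b hb a ha).2, (h b hb a ha).1⟩

lemma AttSep.mono {C₁' C₂' : Set α} (h : AttSep att C₁ C₂) (h1 : C₁' ⊆ C₁) (h2 : C₂' ⊆ C₂) :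
    AttSep att C₁' C₂' := fun a ha b hb => h a (h1 ha) b (h2 hb)

open Classical in
/-- Combine two labelings: use `L₁` on `C`, `L₂` elsewhere. -/
noncomputable def comb (C : Set α) (L₁ L₂ : α → Lab) : α → Lab :=
  fun a => if a ∈ C then L₁ a else L₂ a

lemma comb_mem {a : α} (ha : a ∈ C) : comb C L₁ L₂ a = L₁ a := if_pos ha
lemma comb_not_mem {a : α} (ha : a ∉ C) : comb C L₁ L₂ a = L₂ a := if_neg ha

def labSet (ℓ : Lab) (C : Set α) (L : α → Lab) : Set α := {a ∈ C | L a = ℓ}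

lemma inSet_eq_labSet : inSet C L = labSet Lab.argIn C L := rfl
lemma undecSet_eq_labSet : undecSet C L = labSet Lab.argUndec C L := rfl

lemma labSet_subset (ℓ : Lab) : labSet ℓ C L ⊆ C := fun _ h => h.1

lemma labSet_union (ℓ : Lab) : labSet ℓ (C₁ ∪ C₂) L = labSet ℓ C₁ L ∪ labSet ℓ C₂ L := by
  ext a; simp only [labSet, Set.mem_setOf_eq, Set.mem_union]; tauto

lemma labSet_comb (ℓ : Lab) (hd : Disjoint C₁ C₂) :
    labSet ℓ (C₁ ∪ C₂) (comb C₁ L₁ L₂) = labSet ℓ C₁ L₁ ∪ labSet ℓ C₂ L₂ := by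
  ext a
  simp only [labSet, Set.mem_setOf_eq, Set.mem_union]
  by_cases ha : a ∈ C₁
  · rw [comb_mem ha]
    have : a ∉ C₂ := Set.disjoint_left.mp hd ha
    tauto
  · rw [comb_not_mem ha]; tauto

lemma complete_restrict (hsep : AttSep att C₁ C₂) (h : IsCompleteLab att (C₁ ∪ C₂) L) :
    IsCompleteLab att C₁ L := by
  obtain ⟨h1, h2, h3⟩ := h
  refine ⟨?_, ?_, ?_⟩
  · intro a ha hla
    obtain ⟨b, hb, hbin, hatt⟩ := h1 a (Or.inl ha) hla
    refine ⟨b, ?_, hbin, hatt⟩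
    rcases hb with hb | hb
    · exact hb
    · exact absurd hatt (hsep a ha b hb).2
  · intro a ha hla b hb hatt
    exact h2 a (Or.inl ha) hla b (Or.inl hb) hatt
  · intro a ha hla
    obtain ⟨hno, b, hb, hatt, hnb⟩ := h3 a (Or.inl ha) hla
    refine ⟨fun b hb hatt => hno b (Or.inl hb) hatt, b, ?_, hatt, hnb⟩
    rcases hb with hb | hb
    · exact hb
    · exact absurd hatt (hsep a ha b hb).2

lemma complete_restrict₂ (hsep : AttSep att C₁ C₂) (h : IsCompleteLab att (C₁ ∪ C₂) L) :
    IsCompleteLab att C₂ L :=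
  complete_restrict hsep.symm (Set.union_comm C₁ C₂ ▸ h)

lemma complete_comb (hd : Disjoint C₁ C₂) (hsep : AttSep att C₁ C₂)
    (h₁ : IsCompleteLab att C₁ L₁) (h₂ : IsCompleteLab att C₂ L₂) :
    IsCompleteLab att (C₁ ∪ C₂) (comb C₁ L₁ L₂) := by
  obtain ⟨p1, p2, p3⟩ := h₁
  obtain ⟨q1, q2, q3⟩ := h₂
  refine ⟨?_, ?_, ?_⟩
  · intro a ha hla
    rcases ha with ha | ha
    · rw [comb_mem ha] at hla
      obtain ⟨b, hb, hbin, hatt⟩ := p1 a ha hla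
      exact ⟨b, Or.inl hb, by rw [comb_mem hb]; exact hbin, hatt⟩
    · have ha1 : a ∉ C₁ := Set.disjoint_right.mp hd ha
      rw [comb_not_mem ha1] at hla
      obtain ⟨b, hb, hbin, hatt⟩ := q1 a ha hla
      have hb1 : b ∉ C₁ := Set.disjoint_right.mp hd hb
      exact ⟨b, Or.inr hb, by rw [comb_not_mem hb1]; exact hbin, hatt⟩
  · intro a ha hla b hb hatt
    rcases ha with ha | ha
    · rw [comb_mem ha] at hla
      have hb1 : b ∈ C₁ := by
        rcases hb with hb | hb
        · exact hb
        · exact absurd hatt (hsep a ha b hb).2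
      rw [comb_mem hb1]
      exact p2 a ha hla b hb1 hatt
    · have ha1 : a ∉ C₁ := Set.disjoint_right.mp hd ha
      rw [comb_not_mem ha1] at hla
      have hb2 : b ∈ C₂ := by
        rcases hb with hb | hb
        · exact absurd hatt (hsep b hb a ha).1
        · exact hb
      rw [comb_not_mem (Set.disjoint_right.mp hd hb2)]
      exact q2 a ha hla b hb2 hatt
  · intro a ha hla
    rcases ha with ha | ha
    · rw [comb_mem ha] at hla
      obtain ⟨hno, b, hb, hatt, hnb⟩ := p3 a ha hla
      constructor
      · intro c hc hattc
        have hc1 : c ∈ C₁ := by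
          rcases hc with hc | hc
          · exact hc
          · exact absurd hattc (hsep a ha c hc).2
        rw [comb_mem hc1]; exact hno c hc1 hattc
      · exact ⟨b, Or.inl hb, hatt, by rw [comb_mem hb]; exact hnb⟩
    · have ha1 : a ∉ C₁ := Set.disjoint_right.mp hd ha
      rw [comb_not_mem ha1] at hla
      obtain ⟨hno, b, hb, hatt, hnb⟩ := q3 a ha hla
      constructor
      · intro c hc hattc
        have hc2 : c ∈ C₂ := by
          rcases hc with hc | hc
          · exact absurd hattc (hsep c hc a ha).1
          · exact hc
        rw [comb_not_mem (Set.disjoint_right.mp hd hc2)]; exact hno c hc2 hattc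
      · exact ⟨b, Or.inr hb, hatt,
          by rw [comb_not_mem (Set.disjoint_right.mp hd hb)]; exact hnb⟩

end Aux

section Opt
variable {α : Type*} {att : α → α → Prop} {C C₁ C₂ : Set α} {L L₁ L₂ : α → Lab}

/-- Generic "optimal complete labeling" pattern covering grounded, preferred, semi-stable. -/
def OptLab (ℓ : Lab) (R : Set α → Set α → Prop) (att : α → α → Prop) (C : Set α)
    (L : α → Lab) : Prop :=
  IsCompleteLab att C L ∧ ∀ L', IsCompleteLab att C L' →
    R (labSet ℓ C L') (labSet ℓ C L) → R (labSet ℓ C L) (labSet ℓ C L')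

variable {ℓ : Lab} {R : Set α → Set α → Prop}

lemma opt_restrict (hd : Disjoint C₁ C₂) (hsep : AttSep att C₁ C₂)
    (Hrefl : ∀ s : Set α, R s s)
    (Hmon : ∀ {s t s' t' : Set α}, R s t → R s' t' → R (s ∪ s') (t ∪ t'))
    (Hext : ∀ {D₁ D₂ : Set α} {s t s' t' : Set α}, Disjoint D₁ D₂ → s ⊆ D₁ → t ⊆ D₁ →
      s' ⊆ D₂ → t' ⊆ D₂ → R (s ∪ s') (t ∪ t') → R s t)
    (h : OptLab ℓ R att (C₁ ∪ C₂) L) : OptLab ℓ R att C₁ L := by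
  obtain ⟨hc, hopt⟩ := h
  have hc₁ := complete_restrict hsep hc
  have hc₂ := complete_restrict₂ hsep hc
  refine ⟨hc₁, ?_⟩
  intro L'' hc'' hR
  have hcomb : IsCompleteLab att (C₁ ∪ C₂) (comb C₁ L'' L) := complete_comb hd hsep hc'' hc₂
  have hls : labSet ℓ (C₁ ∪ C₂) (comb C₁ L'' L) = labSet ℓ C₁ L'' ∪ labSet ℓ C₂ L :=
    labSet_comb ℓ hd
  have hls2 : labSet ℓ (C₁ ∪ C₂) L = labSet ℓ C₁ L ∪ labSet ℓ C₂ L := labSet_union ℓ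
  have key := hopt (comb C₁ L'' L) hcomb (by
    rw [hls, hls2]; exact Hmon hR (Hrefl _))
  rw [hls, hls2] at key
  exact Hext hd (labSet_subset ℓ) (labSet_subset ℓ) (labSet_subset ℓ) (labSet_subset ℓ) key

lemma opt_comb (hd : Disjoint C₁ C₂) (hsep : AttSep att C₁ C₂)
    (Hmon : ∀ {s t s' t' : Set α}, R s t → R s' t' → R (s ∪ s') (t ∪ t'))
    (Hext : ∀ {D₁ D₂ : Set α} {s t s' t' : Set α}, Disjoint D₁ D₂ → s ⊆ D₁ → t ⊆ D₁ →
      s' ⊆ D₂ → t' ⊆ D₂ → R (s ∪ s') (t ∪ t') → R s t)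
    (h₁ : OptLab ℓ R att C₁ L₁) (h₂ : OptLab ℓ R att C₂ L₂) :
    OptLab ℓ R att (C₁ ∪ C₂) (comb C₁ L₁ L₂) := by
  refine ⟨complete_comb hd hsep h₁.1 h₂.1, ?_⟩
  intro L' hc' hR
  have hls : labSet ℓ (C₁ ∪ C₂) (comb C₁ L₁ L₂) = labSet ℓ C₁ L₁ ∪ labSet ℓ C₂ L₂ :=
    labSet_comb ℓ hd
  have hls2 : labSet ℓ (C₁ ∪ C₂) L' = labSet ℓ C₁ L' ∪ labSet ℓ C₂ L' := labSet_union ℓ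
  rw [hls, hls2] at hR ⊢
  have hR₁ : R (labSet ℓ C₁ L') (labSet ℓ C₁ L₁) :=
    Hext hd (labSet_subset ℓ) (labSet_subset ℓ) (labSet_subset ℓ) (labSet_subset ℓ) hR
  have hR₂ : R (labSet ℓ C₂ L') (labSet ℓ C₂ L₂) := by
    refine Hext (s' := labSet ℓ C₁ L') (t' := labSet ℓ C₁ L₁) hd.symm (labSet_subset ℓ)
      (labSet_subset ℓ) (labSet_subset ℓ) (labSet_subset ℓ) ?_
    rw [Set.union_comm (labSet ℓ C₂ L') _, Set.union_comm (labSet ℓ C₂ L₂) _]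
    exact hR
  exact Hmon (h₁.2 L' (complete_restrict hsep hc') hR₁)
    (h₂.2 L' (complete_restrict₂ hsep hc') hR₂)

lemma subR_refl (s : Set α) : s ⊆ s := subset_rfl
lemma subR_mon {s t s' t' : Set α} (h : s ⊆ t) (h' : s' ⊆ t') : s ∪ s' ⊆ t ∪ t' :=
  Set.union_subset_union h h'
lemma subR_ext {D₁ D₂ s t s' t' : Set α} (hd : Disjoint D₁ D₂) (hs : s ⊆ D₁) (_ : t ⊆ D₁)
    (_ : s' ⊆ D₂) (ht' : t' ⊆ D₂) (h : s ∪ s' ⊆ t ∪ t') : s ⊆ t := by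
  intro a ha
  rcases h (Or.inl ha) with h' | h'
  · exact h'
  · exact absurd (ht' h') (Set.disjoint_left.mp hd (hs ha))

lemma supR_refl (s : Set α) : s ⊇ s := subset_rfl
lemma supR_mon {s t s' t' : Set α} (h : s ⊇ t) (h' : s' ⊇ t') : s ∪ s' ⊇ t ∪ t' :=
  Set.union_subset_union h h'
lemma supR_ext {D₁ D₂ s t s' t' : Set α} (hd : Disjoint D₁ D₂) (_ : s ⊆ D₁) (ht : t ⊆ D₁)
    (hs' : s' ⊆ D₂) (_ : t' ⊆ D₂) (h : s ∪ s' ⊇ t ∪ t') : s ⊇ t := by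
  intro a ha
  rcases h (Or.inl ha) with h' | h'
  · exact h'
  · exact absurd (hs' h') (Set.disjoint_left.mp hd (ht ha))

lemma semLab_restrict (σ : Sem) (hd : Disjoint C₁ C₂) (hsep : AttSep att C₁ C₂)
    (h : SemLab σ att (C₁ ∪ C₂) L) : SemLab σ att C₁ L := by
  cases σ with
  | complete => exact complete_restrict hsep h
  | grounded =>
      exact opt_restrict (ℓ := Lab.argIn) (R := fun s t => s ⊆ t) hd hsep subR_refl
        (fun h h' => subR_mon h h') (fun hD hs ht hs' ht' hu => subR_ext hD hs ht hs' ht' hu) h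
  | preferred =>
      exact opt_restrict (ℓ := Lab.argIn) (R := fun s t => t ⊆ s) hd hsep supR_refl
        (fun h h' => supR_mon h h') (fun hD hs ht hs' ht' hu => supR_ext hD hs ht hs' ht' hu) h
  | stable =>
      refine ⟨complete_restrict hsep h.1, ?_⟩
      have : undecSet C₁ L ⊆ undecSet (C₁ ∪ C₂) L := fun a ha => ⟨Or.inl ha.1, ha.2⟩
      rw [h.2] at this
      exact Set.subset_empty_iff.mp this
  | semiStable =>
      exact opt_restrict (ℓ := Lab.argUndec) (R := fun s t => s ⊆ t) hd hsep subR_refl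
        (fun h h' => subR_mon h h') (fun hD hs ht hs' ht' hu => subR_ext hD hs ht hs' ht' hu) h

lemma semLab_restrict₂ (σ : Sem) (hd : Disjoint C₁ C₂) (hsep : AttSep att C₁ C₂)
    (h : SemLab σ att (C₁ ∪ C₂) L) : SemLab σ att C₂ L :=
  semLab_restrict σ hd.symm hsep.symm (Set.union_comm C₁ C₂ ▸ h)

lemma semLab_comb (σ : Sem) (hd : Disjoint C₁ C₂) (hsep : AttSep att C₁ C₂)
    (h₁ : SemLab σ att C₁ L₁) (h₂ : SemLab σ att C₂ L₂) :
    SemLab σ att (C₁ ∪ C₂) (comb C₁ L₁ L₂) := by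
  cases σ with
  | complete => exact complete_comb hd hsep h₁ h₂
  | grounded =>
      exact opt_comb (ℓ := Lab.argIn) (R := fun s t => s ⊆ t) hd hsep
        (fun h h' => subR_mon h h') (fun hD hs ht hs' ht' hu => subR_ext hD hs ht hs' ht' hu)
        h₁ h₂
  | preferred =>
      exact opt_comb (ℓ := Lab.argIn) (R := fun s t => t ⊆ s) hd hsep
        (fun h h' => supR_mon h h') (fun hD hs ht hs' ht' hu => supR_ext hD hs ht hs' ht' hu)
        h₁ h₂
  | stable =>
      refine ⟨complete_comb hd hsep h₁.1 h₂.1, ?_⟩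
      rw [undecSet_eq_labSet, labSet_comb _ hd, ← undecSet_eq_labSet, ← undecSet_eq_labSet,
        h₁.2, h₂.2, Set.union_empty]
  | semiStable =>
      exact opt_comb (ℓ := Lab.argUndec) (R := fun s t => s ⊆ t) hd hsep
        (fun h h' => subR_mon h h') (fun hD hs ht hs' ht' hu => subR_ext hD hs ht hs' ht' hu)
        h₁ h₂

end Opt

section Strat
variable {α : Type*} {att : α → α → Prop} {σ : Sem} {C C₁ C₂ : Set α} {L L₁ L₂ : α → Lab}

lemma inSet_union : inSet (C₁ ∪ C₂) L = inSet C₁ L ∪ inSet C₂ L := labSet_union _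
lemma inSet_comb (hd : Disjoint C₁ C₂) :
    inSet (C₁ ∪ C₂) (comb C₁ L₁ L₂) = inSet C₁ L₁ ∪ inSet C₂ L₂ := labSet_comb _ hd
lemma inSet_subset : inSet C L ⊆ C := fun _ h => h.1

lemma diff_union_inSets (hd : Disjoint C₁ C₂) :
    (C₁ ∪ C₂) \ (inSet C₁ L₁ ∪ inSet C₂ L₂) = (C₁ \ inSet C₁ L₁) ∪ (C₂ \ inSet C₂ L₂) := by
  ext a
  constructor
  · rintro ⟨h | h, hn⟩
    · exact Or.inl ⟨h, fun hin => hn (Or.inl hin)⟩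
    · exact Or.inr ⟨h, fun hin => hn (Or.inr hin)⟩
  · rintro (⟨h, hn⟩ | ⟨h, hn⟩)
    · refine ⟨Or.inl h, ?_⟩
      rintro (hin | hin)
      · exact hn hin
      · exact (Set.disjoint_left.mp hd h) hin.1
    · refine ⟨Or.inr h, ?_⟩
      rintro (hin | hin)
      · exact (Set.disjoint_right.mp hd h) hin.1
      · exact hn hin

/-- Restriction of a stratified labeling to a union of components: existence. -/
lemma strat_restrict {S : α → ℕ∞} (h : Stratified σ att C S) :
    ∀ C₁ C₂ : Set α, C = C₁ ∪ C₂ → Disjoint C₁ C₂ → AttSep att C₁ C₂ →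
      ∃ T, Stratified σ att C₂ T := by
  induction h with
  | @ofEmpty C S L hL hin hS =>
      intro C₁ C₂ hC hd hsep
      subst hC
      refine ⟨fun _ => ⊤, Stratified.ofEmpty L (semLab_restrict₂ σ hd hsep hL) ?_
        (fun a _ => rfl)⟩
      have : inSet C₂ L ⊆ inSet (C₁ ∪ C₂) L := fun a ha => ⟨Or.inr ha.1, ha.2⟩
      rw [hin] at this
      exact Set.subset_empty_iff.mp this
  | @ofStep C S L S' hL hin hS' h0 h1 ih =>
      intro C₁ C₂ hC hd hsep
      subst hC
      have hdiff : (C₁ ∪ C₂) \ inSet (C₁ ∪ C₂) L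
          = (C₁ \ inSet C₁ L) ∪ (C₂ \ inSet C₂ L) := by
        rw [inSet_union, diff_union_inSets hd]
      obtain ⟨T', hT'⟩ := ih (C₁ \ inSet C₁ L) (C₂ \ inSet C₂ L) hdiff
        (hd.mono Set.diff_subset Set.diff_subset)
        (hsep.mono Set.diff_subset Set.diff_subset)
      by_cases hne : (inSet C₂ L).Nonempty
      · classical
        refine ⟨fun a => if a ∈ inSet C₂ L then 0 else 1 + T' a,
          Stratified.ofStep L T' (semLab_restrict₂ σ hd hsep hL) hne hT' ?_ ?_⟩
        · intro a ha; exact if_pos ha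
        · intro a ha; exact if_neg ha.2
      · rw [Set.not_nonempty_iff_eq_empty] at hne
        rw [hne, Set.diff_empty] at hT'
        exact ⟨T', hT'⟩

/-- Combining a stratified labeling with a component whose `σ`-labeling has empty in-set. -/
lemma strat_comb_empty {S₁ : α → ℕ∞} (h₁ : Stratified σ att C₁ S₁) :
    ∀ C₂ : Set α, ∀ L₂ : α → Lab, Disjoint C₁ C₂ → AttSep att C₁ C₂ →
      SemLab σ att C₂ L₂ → inSet C₂ L₂ = ∅ →
      ∃ S, Stratified σ att (C₁ ∪ C₂) S ∧ (∀ a ∈ C₁, S a = S₁ a) ∧ (∀ a ∈ C₂, S a = ⊤) := by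
  induction h₁ with
  | @ofEmpty C₁ S₁ L₁ hL₁ hin₁ hS₁ =>
      intro C₂ L₂ hd hsep hL₂ hin₂
      refine ⟨fun _ => ⊤, Stratified.ofEmpty (comb C₁ L₁ L₂) (semLab_comb σ hd hsep hL₁ hL₂)
        ?_ (fun a _ => rfl), fun a ha => (hS₁ a ha).symm, fun a _ => rfl⟩
      rw [inSet_comb hd, hin₁, hin₂, Set.union_empty]
  | @ofStep C₁ S₁ L₁ S₁' hL₁ hin₁ hS₁' h0₁ h1₁ ih =>
      intro C₂ L₂ hd hsep hL₂ hin₂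
      obtain ⟨S_next, hstrat, hA, hB⟩ := ih C₂ L₂ (hd.mono_left Set.diff_subset)
        (hsep.mono Set.diff_subset subset_rfl) hL₂ hin₂
      classical
      have hIS : inSet (C₁ ∪ C₂) (comb C₁ L₁ L₂) = inSet C₁ L₁ := by
        rw [inSet_comb hd, hin₂, Set.union_empty]
      have hdiff : (C₁ ∪ C₂) \ inSet (C₁ ∪ C₂) (comb C₁ L₁ L₂)
          = (C₁ \ inSet C₁ L₁) ∪ C₂ := by
        rw [hIS]
        have := diff_union_inSets (L₁ := L₁) (L₂ := L₂) hd
        rw [hin₂, Set.union_empty, Set.diff_empty] at this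
        exact this
      refine ⟨fun a => if a ∈ inSet C₁ L₁ then 0 else 1 + S_next a, ?_, ?_, ?_⟩
      · refine Stratified.ofStep (comb C₁ L₁ L₂) S_next (semLab_comb σ hd hsep hL₁ hL₂)
          (by rw [hIS]; exact hin₁) (by rw [hdiff]; exact hstrat) ?_ ?_
        · intro a ha; rw [hIS] at ha; exact if_pos ha
        · intro a ha
          rw [hIS] at ha
          exact if_neg ha.2
      · intro a ha
        beta_reduce
        by_cases hm : a ∈ inSet C₁ L₁
        · rw [if_pos hm]; exact (h0₁ a hm).symm
        · rw [if_neg hm, hA a ⟨ha, hm⟩]; exact (h1₁ a ⟨ha, hm⟩).symm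
      · intro a ha
        beta_reduce
        have hm : a ∉ inSet C₁ L₁ := fun h => Set.disjoint_right.mp hd ha h.1
        rw [if_neg hm, hB a ha]
        simp

/-- Combining two stratified labelings on separated components, keeping values. -/
lemma strat_comb {S₂ : α → ℕ∞} (h₂ : Stratified σ att C₂ S₂) :
    ∀ C₁ : Set α, ∀ S₁ : α → ℕ∞, Disjoint C₁ C₂ → AttSep att C₁ C₂ →
      Stratified σ att C₁ S₁ →
      ∃ S, Stratified σ att (C₁ ∪ C₂) S ∧ (∀ a ∈ C₁, S a = S₁ a) ∧ (∀ a ∈ C₂, S a = S₂ a) := by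
  induction h₂ with
  | @ofEmpty C₂ S₂ L₂ hL₂ hin₂ hS₂ =>
      intro C₁ S₁ hd hsep h₁
      obtain ⟨S, h, hA, hB⟩ := strat_comb_empty h₁ C₂ L₂ hd hsep hL₂ hin₂
      exact ⟨S, h, hA, fun a ha => (hB a ha).trans (hS₂ a ha).symm⟩
  | @ofStep C₂ S₂ L₂ S₂' hL₂ hin₂ hS₂' h0₂ h1₂ ih =>
      intro C₁ S₁ hd hsep h₁
      cases h₁ with
      | ofEmpty L₁ hL₁ hin₁ hS₁ =>
          have hstr₂ : Stratified σ att C₂ S₂ := Stratified.ofStep L₂ S₂' hL₂ hin₂ hS₂' h0₂ h1₂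
          obtain ⟨S, h, hA, hB⟩ := strat_comb_empty hstr₂ C₁ L₁ hd.symm hsep.symm hL₁ hin₁
          rw [Set.union_comm] at h
          exact ⟨S, h, fun a ha => (hB a ha).trans (hS₁ a ha).symm, hA⟩
      | ofStep L₁ S₁' hL₁ hin₁ hS₁' h0₁ h1₁ =>
          obtain ⟨S_next, hstrat, hA, hB⟩ := ih (C₁ \ inSet C₁ L₁) S₁'
            (hd.mono Set.diff_subset Set.diff_subset)
            (hsep.mono Set.diff_subset Set.diff_subset) hS₁'
          classical
          have hIS : inSet (C₁ ∪ C₂) (comb C₁ L₁ L₂) = inSet C₁ L₁ ∪ inSet C₂ L₂ :=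
            inSet_comb hd
          have hdiff : (C₁ ∪ C₂) \ inSet (C₁ ∪ C₂) (comb C₁ L₁ L₂)
              = (C₁ \ inSet C₁ L₁) ∪ (C₂ \ inSet C₂ L₂) := by
            rw [hIS, diff_union_inSets hd]
          refine ⟨fun a => if a ∈ inSet C₁ L₁ ∪ inSet C₂ L₂ then 0 else 1 + S_next a,
            ?_, ?_, ?_⟩
          · refine Stratified.ofStep (comb C₁ L₁ L₂) S_next (semLab_comb σ hd hsep hL₁ hL₂)
              ?_ (by rw [hdiff]; exact hstrat) ?_ ?_
            · rw [hIS]; obtain ⟨a, ha⟩ := hin₁; exact ⟨a, Or.inl ha⟩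
            · intro a ha; rw [hIS] at ha; exact if_pos ha
            · intro a ha
              rw [hIS] at ha
              exact if_neg ha.2
          · intro a ha
            beta_reduce
            by_cases hm : a ∈ inSet C₁ L₁
            · rw [if_pos (Set.mem_union_left _ hm)]; exact (h0₁ a hm).symm
            · have hm2 : a ∉ inSet C₂ L₂ := fun h => Set.disjoint_left.mp hd ha h.1
              have hno : a ∉ inSet C₁ L₁ ∪ inSet C₂ L₂ := by
                intro h; rcases (Set.mem_union _ _ _).mp h with h | h
                exacts [hm h, hm2 h]
              rw [if_neg hno, hA a ⟨ha, hm⟩]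
              exact (h1₁ a ⟨ha, hm⟩).symm
          · intro a ha
            beta_reduce
            by_cases hm : a ∈ inSet C₂ L₂
            · rw [if_pos (Set.mem_union_right _ hm)]; exact (h0₂ a hm).symm
            · have hm1 : a ∉ inSet C₁ L₁ := fun h => Set.disjoint_right.mp hd ha h.1
              have hno : a ∉ inSet C₁ L₁ ∪ inSet C₂ L₂ := by
                intro h; rcases (Set.mem_union _ _ _).mp h with h | h
                exacts [hm1 h, hm h]
              rw [if_neg hno, hB a ⟨ha, hm⟩]
              exact (h1₂ a ⟨ha, hm⟩).symm

end Strat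

/-- Irrelevance*: Let `AF` be a finite framework admitting at least one
`σ`-stratified labeling and `B` a union of weakly connected components. Then every
`σ`-stratified labeling `S'` of `AF|B` extends to some `σ`-stratified labeling `S` of
`AF` agreeing with `S'` on `B` in the induced order: for arguments of `B`, equalities
and inequalities of ranks are preserved in both directions. -/
theorem stratified_irrelevance {α : Type*} [Fintype α] (att : α → α → Prop) (σ : Sem)
    (hne : ∃ S : α → ℕ∞, Stratified σ att Set.univ S)
    (B : Set α)
    (hB : ∀ A C : α, att A C → ((A ∈ B ∧ C ∈ B) ∨ (A ∉ B ∧ C ∉ B)))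
    (S' : α → ℕ∞) (hS' : Stratified σ att B S') :
    ∃ S : α → ℕ∞, Stratified σ att Set.univ S ∧
      ∀ B₁ ∈ B, ∀ B₂ ∈ B,
        (S' B₁ = S' B₂ ↔ S B₁ = S B₂) ∧ (S' B₁ ≤ S' B₂ ↔ S B₁ ≤ S B₂) := by
  have hsep : AttSep att Bᶜ B := by
    intro a ha b hb
    constructor
    · intro hatt
      rcases hB a b hatt with ⟨h1, _⟩ | ⟨_, h2⟩
      · exact absurd h1 ha
      · exact absurd hb h2
    · intro hatt
      rcases hB b a hatt with ⟨_, h2⟩ | ⟨h1, _⟩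
      · exact absurd h2 ha
      · exact absurd hb h1
  obtain ⟨S₀, hS₀⟩ := hne
  obtain ⟨T, hT⟩ := strat_restrict hS₀ B Bᶜ (Set.union_compl_self B).symm
    disjoint_compl_right hsep.symm
  obtain ⟨S, hS, _, hBeq⟩ := strat_comb hS' Bᶜ T disjoint_compl_left hsep hT
  rw [Set.compl_union_self] at hS
  refine ⟨S, hS, ?_⟩
  intro b₁ h₁ b₂ h₂
  rw [hBeq b₁ h₁, hBeq b₂ h₂]
  exact ⟨Iff.rfl, Iff.rfl⟩
end

section
/- Let σ be one of the semantics complete, grounded, preferred, stable, or semi-stable, let AF = (Ar, att) be a finite abstract argumentation framework, and let S be a σ-stratified labeling of AF. If A ∈ Ar is unattacked, then S(A) = 0; consequently S(A) ≤ S(B) for every B ∈ Ar. (The ordinal σ-stratified semantics satisfies Weak Void Precedence*.) -/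
theorem SemLab.isCompleteLab {α : Type*} {σ : Sem} {att : α → α → Prop} {C : Set α}
    {L : α → Lab} (h : SemLab σ att C L) : IsCompleteLab att C L := by
  cases σ <;> first | exact h | exact h.1

theorem IsCompleteLab.eq_argIn_of_unattacked {α : Type*} {att : α → α → Prop} {C : Set α}
    {L : α → Lab} (hL : IsCompleteLab att C L) {a : α} (ha : a ∈ C)
    (hunatt : ∀ b ∈ C, ¬ att b a) : L a = Lab.argIn := by
  rcases h : L a with _ | _ | _
  · rfl
  · obtain ⟨b, hb, -, hba⟩ := hL.1 a ha h
    exact absurd hba (hunatt b hb)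
  · obtain ⟨b, hb, hba, -⟩ := (hL.2.2 a ha h).2
    exact absurd hba (hunatt b hb)

theorem Stratified.eq_zero_of_unattacked {α : Type*} {σ : Sem} {att : α → α → Prop}
    {C : Set α} {S : α → ℕ∞} (hS : Stratified σ att C S) {a : α} (ha : a ∈ C)
    (hunatt : ∀ b ∈ C, ¬ att b a) : S a = 0 := by
  cases hS with
  | ofEmpty L hL hin _ =>
    have ha_in : a ∈ inSet C L := ⟨ha, hL.isCompleteLab.eq_argIn_of_unattacked ha hunatt⟩
    simp [hin] at ha_in
  | ofStep L _ hL _ _ h0 _ =>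
    exact h0 a ⟨ha, hL.isCompleteLab.eq_argIn_of_unattacked ha hunatt⟩

theorem stratified_weak_void_precedence_general {α : Type*} (att : α → α → Prop)
    (σ : Sem) (S : α → ℕ∞) (hS : Stratified σ att Set.univ S)
    (A : α) (hA : ∀ B : α, ¬ att B A) :
    S A = 0 ∧ ∀ B : α, S A ≤ S B := by
  have hSA : S A = 0 := hS.eq_zero_of_unattacked (Set.mem_univ A) fun B _ => hA B
  exact ⟨hSA, fun B => hSA ▸ zero_le⟩

/-- Weak Void Precedence*: In every `σ`-stratified labeling of a finite
framework, an unattacked argument gets rank `0`, hence a rank less than or equal to that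
of any other argument. -/
theorem stratified_weak_void_precedence {α : Type*} [Fintype α] (att : α → α → Prop)
    (σ : Sem) (S : α → ℕ∞) (hS : Stratified σ att Set.univ S)
    (A : α) (hA : ∀ B : α, ¬ att B A) :
    S A = 0 ∧ ∀ B : α, S A ≤ S B :=
  stratified_weak_void_precedence_general att σ S hS A hA
end

section
/- Let AF be the abstract argumentation framework with arguments {A1, A2, A3, A4, A5} and attacks A1 → A2, A2 → A3, A3 → A4, A4 → A3, A4 → A5, and A5 → A3. Then the (unique) grounded-stratified labeling S of AF satisfies S(A1) = 0, S(A2) = 1, S(A3) = 3, S(A4) = 1, and S(A5) = 2. In particular, this framework witnesses that the ordinal grounded-stratified semantics does not satisfy Quality Precedence*: the set of attackers of A5 is {A4} and the set of attackers of A2 is {A1} with S(A1) = 0 < 1 = S(A4), yet S(A5) = 2 > 1 = S(A2). -/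
lemma in_of_attackers_out {α : Type*} {att : α → α → Prop} {C : Set α} {L : α → Lab}
    (h : IsCompleteLab att C L) {a : α} (ha : a ∈ C)
    (hb : ∀ b ∈ C, att b a → L b = Lab.argOut) : L a = Lab.argIn := by
  cases hLa : L a with
  | argIn => rfl
  | argOut =>
    obtain ⟨b, hbC, hbin, hatt⟩ := h.1 a ha hLa
    rw [hb b hbC hatt] at hbin; cases hbin
  | argUndec =>
    obtain ⟨_, b, hbC, hatt, hne⟩ := h.2.2 a ha hLa
    exact absurd (hb b hbC hatt) hne

lemma out_of_attacker_in {α : Type*} {att : α → α → Prop} {C : Set α} {L : α → Lab}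
    (h : IsCompleteLab att C L) {a b : α}
    (ha : a ∈ C) (hbC : b ∈ C) (hatt : att b a) (hbin : L b = Lab.argIn) :
    L a = Lab.argOut := by
  cases hLa : L a with
  | argOut => rfl
  | argIn => have := h.2.1 a ha hLa b hbC hatt; rw [hbin] at this; cases this
  | argUndec => exact absurd hbin ((h.2.2 a ha hLa).1 b hbC hatt)

def att5 : Fin 5 → Fin 5 → Prop := fun X Y =>
  (X = 0 ∧ Y = 1) ∨ (X = 1 ∧ Y = 2) ∨ (X = 2 ∧ Y = 3) ∨ (X = 3 ∧ Y = 2) ∨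
  (X = 3 ∧ Y = 4) ∨ (X = 4 ∧ Y = 2)

instance : DecidableRel att5 := fun a b => by unfold att5; infer_instance

lemma att_to0 : ∀ b : Fin 5, ¬ att5 b 0 := by decide
lemma att_to1 : ∀ b : Fin 5, att5 b 1 ↔ b = 0 := by decide
lemma att_to2 : ∀ b : Fin 5, att5 b 2 ↔ b = 1 ∨ b = 3 ∨ b = 4 := by decide
lemma att_to3 : ∀ b : Fin 5, att5 b 3 ↔ b = 2 := by decide
lemma att_to4 : ∀ b : Fin 5, att5 b 4 ↔ b = 3 := by decide

def L0canon : Fin 5 → Lab := fun a =>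
  if a = 0 then Lab.argIn else if a = 1 then Lab.argOut else Lab.argUndec

lemma L0_complete : IsCompleteLab att5 Set.univ L0canon := by
  unfold IsCompleteLab
  simp only [Set.mem_univ, true_and, true_implies, forall_const, exists_prop]
  refine ⟨?_, ?_, ?_⟩ <;> decide

/-- Level 0: any grounded labeling of the full framework has in-set {0}. -/
lemma inSet0 (L : Fin 5 → Lab) (hL : SemLab Sem.grounded att5 Set.univ L) :
    inSet Set.univ L = {0} := by
  obtain ⟨hc, hmin⟩ := hL
  have h0in : L 0 = Lab.argIn :=
    in_of_attackers_out hc (Set.mem_univ 0) (fun b _ hb => absurd hb (att_to0 b))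
  have hcanon : ∀ a : Fin 5, L0canon a = Lab.argIn ↔ a = 0 := by decide
  have hsub : inSet Set.univ L0canon ⊆ inSet Set.univ L := by
    rintro a ⟨-, ha⟩
    rw [hcanon a] at ha; subst ha
    exact ⟨Set.mem_univ _, h0in⟩
  have hsub2 := hmin L0canon L0_complete hsub
  ext a
  constructor
  · intro ha
    obtain ⟨-, h⟩ := hsub2 ha
    rw [hcanon a] at h
    simpa using h
  · intro ha
    simp only [Set.mem_singleton_iff] at ha; subst ha
    exact ⟨Set.mem_univ _, h0in⟩

/-- Level 1. -/
lemma inSet1 (L : Fin 5 → Lab)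
    (hc : IsCompleteLab att5 (Set.univ \ ({0} : Set (Fin 5))) L) :
    inSet (Set.univ \ ({0} : Set (Fin 5))) L = {1, 3} := by
  set C : Set (Fin 5) := Set.univ \ ({0} : Set (Fin 5)) with hC
  have hmem : ∀ a : Fin 5, a ∈ C ↔ a ≠ 0 := by intro a; simp [hC]
  have h1in : L 1 = Lab.argIn := by
    refine in_of_attackers_out hc ((hmem 1).2 (by decide)) ?_
    intro b hb hatt
    rw [att_to1] at hatt
    exact absurd hatt ((hmem b).1 hb)
  have h2out : L 2 = Lab.argOut :=
    out_of_attacker_in hc ((hmem 2).2 (by decide)) ((hmem 1).2 (by decide))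
      (by rw [att_to2]; left; rfl) h1in
  have h3in : L 3 = Lab.argIn := by
    refine in_of_attackers_out hc ((hmem 3).2 (by decide)) ?_
    intro b _ hatt
    rw [att_to3] at hatt; subst hatt; exact h2out
  have h4out : L 4 = Lab.argOut :=
    out_of_attacker_in hc ((hmem 4).2 (by decide)) ((hmem 3).2 (by decide))
      (by rw [att_to4]) h3in
  ext a
  simp only [inSet, Set.mem_setOf_eq, hmem, Set.mem_insert_iff, Set.mem_singleton_iff]
  fin_cases a <;> simp_all

/-- Level 2. -/
lemma inSet2 (L : Fin 5 → Lab)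
    (hc : IsCompleteLab att5 ((Set.univ \ ({0} : Set (Fin 5))) \ ({1, 3} : Set (Fin 5))) L) :
    inSet ((Set.univ \ ({0} : Set (Fin 5))) \ ({1, 3} : Set (Fin 5))) L = {4} := by
  set C : Set (Fin 5) := (Set.univ \ ({0} : Set (Fin 5))) \ ({1, 3} : Set (Fin 5)) with hC
  have hmem : ∀ a : Fin 5, a ∈ C ↔ (a ≠ 0 ∧ a ≠ 1 ∧ a ≠ 3) := by
    intro a; simp [hC, and_comm]
  have h4in : L 4 = Lab.argIn := by
    refine in_of_attackers_out hc ((hmem 4).2 (by decide)) ?_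
    intro b hb hatt
    rw [att_to4] at hatt; subst hatt
    exact absurd rfl ((hmem 3).1 hb).2.2
  have h2out : L 2 = Lab.argOut :=
    out_of_attacker_in hc ((hmem 2).2 (by decide)) ((hmem 4).2 (by decide))
      (by rw [att_to2]; right; right; rfl) h4in
  ext a
  simp only [inSet, Set.mem_setOf_eq, hmem, Set.mem_singleton_iff]
  fin_cases a <;> simp_all

/-- Level 3. -/
lemma inSet3 (L : Fin 5 → Lab)
    (hc : IsCompleteLab att5
      (((Set.univ \ ({0} : Set (Fin 5))) \ ({1, 3} : Set (Fin 5))) \ ({4} : Set (Fin 5))) L) :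
    inSet (((Set.univ \ ({0} : Set (Fin 5))) \ ({1, 3} : Set (Fin 5))) \ ({4} : Set (Fin 5))) L
      = {2} := by
  set C : Set (Fin 5) :=
    ((Set.univ \ ({0} : Set (Fin 5))) \ ({1, 3} : Set (Fin 5))) \ ({4} : Set (Fin 5)) with hC
  have hmem : ∀ a : Fin 5, a ∈ C ↔ a = 2 := by
    intro a; simp [hC]; fin_cases a <;> simp
  have h2in : L 2 = Lab.argIn := by
    refine in_of_attackers_out hc ((hmem 2).2 rfl) ?_
    intro b hb hatt
    rw [att_to2] at hatt
    rw [hmem b] at hb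
    subst hb
    rcases hatt with h | h | h <;> cases h
  ext a
  simp only [inSet, Set.mem_setOf_eq, hmem, Set.mem_singleton_iff]
  constructor
  · rintro ⟨h, -⟩; exact h
  · rintro rfl; exact ⟨rfl, h2in⟩

lemma main5 : ∀ S : Fin 5 → ℕ∞, Stratified Sem.grounded att5 Set.univ S →
    (S 0 = 0 ∧ S 1 = 1 ∧ S 2 = 3 ∧ S 3 = 1 ∧ S 4 = 2) ∧
    {X : Fin 5 | att5 X 4} = {3} ∧ {X : Fin 5 | att5 X 1} = {0} ∧
    S 0 < S 3 ∧ S 1 < S 4 := by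
  intro S h
  have hsets : ({X : Fin 5 | att5 X 4} = ({3} : Set (Fin 5))) ∧
      ({X : Fin 5 | att5 X 1} = ({0} : Set (Fin 5))) := by
    constructor <;> · ext x; simp only [Set.mem_setOf_eq, Set.mem_singleton_iff]
                      revert x; decide
  -- Level 0
  cases h with
  | ofEmpty L hL hin hS =>
    rw [inSet0 L hL] at hin
    exact absurd hin (by simp)
  | ofStep L S1 hL hin hS' h0 h1 =>
    have e0 := inSet0 L hL
    rw [e0] at hS' h0 h1
    have hS0 : S 0 = 0 := h0 0 rfl
    -- Level 1
    cases hS' with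
    | ofEmpty L1 hL1 hin1 hS1 =>
      rw [inSet1 L1 hL1.1] at hin1
      have : (1 : Fin 5) ∈ (∅ : Set (Fin 5)) := hin1 ▸ (by simp)
      exact absurd this (by simp)
    | ofStep L1 S2 hL1 hin1 hS1' h10 h11 =>
      have e1 := inSet1 L1 hL1.1
      rw [e1] at hS1' h10 h11
      -- Level 2
      cases hS1' with
      | ofEmpty L2 hL2 hin2 hS2 =>
        rw [inSet2 L2 hL2.1] at hin2
        have : (4 : Fin 5) ∈ (∅ : Set (Fin 5)) := hin2 ▸ (by simp)
        exact absurd this (by simp)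
      | ofStep L2 S3 hL2 hin2 hS2' h20 h21 =>
        have e2 := inSet2 L2 hL2.1
        rw [e2] at hS2' h20 h21
        -- Level 3
        cases hS2' with
        | ofEmpty L3 hL3 hin3 hS3 =>
          rw [inSet3 L3 hL3.1] at hin3
          have : (2 : Fin 5) ∈ (∅ : Set (Fin 5)) := hin3 ▸ (by simp)
          exact absurd this (by simp)
        | ofStep L3 S4 hL3 hin3 hS3' h30 h31 =>
          have e3 := inSet3 L3 hL3.1
          rw [e3] at h30
          -- compute values
          have hS1v : S1 1 = 0 := h10 1 (by simp)
          have hS3v : S1 3 = 0 := h10 3 (by simp)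
          have hS2v4 : S2 4 = 0 := h20 4 rfl
          have hS3v2 : S3 2 = 0 := h30 2 rfl
          have m1 : (1 : Fin 5) ∈ Set.univ \ ({0} : Set (Fin 5)) := by simp
          have m3 : (3 : Fin 5) ∈ Set.univ \ ({0} : Set (Fin 5)) := by simp
          have m4 : (4 : Fin 5) ∈ Set.univ \ ({0} : Set (Fin 5)) := by simp
          have m2 : (2 : Fin 5) ∈ Set.univ \ ({0} : Set (Fin 5)) := by simp
          have m4' : (4 : Fin 5) ∈ (Set.univ \ ({0} : Set (Fin 5))) \ ({1, 3} : Set (Fin 5)) := by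
            simp
          have m2' : (2 : Fin 5) ∈ (Set.univ \ ({0} : Set (Fin 5))) \ ({1, 3} : Set (Fin 5)) := by
            simp
          have m2'' : (2 : Fin 5) ∈
              ((Set.univ \ ({0} : Set (Fin 5))) \ ({1, 3} : Set (Fin 5))) \
                ({4} : Set (Fin 5)) := by simp
          have hS1 : S 1 = 1 := by rw [h1 1 m1, hS1v]; rfl
          have hS3 : S 3 = 1 := by rw [h1 3 m3, hS3v]; rfl
          have hS4 : S 4 = 2 := by rw [h1 4 m4, h11 4 m4', hS2v4]; rfl
          have hS2 : S 2 = 3 := by rw [h1 2 m2, h11 2 m2', h21 2 m2'', hS3v2]; rfl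
          refine ⟨⟨hS0, hS1, hS2, hS3, hS4⟩, hsets.1, hsets.2, ?_, ?_⟩
          · rw [hS0, hS3]; decide
          · rw [hS1, hS4]; decide

/-- In the framework with arguments `{A1, …, A5} = {0, …, 4}` and attacks
`A1 → A2`, `A2 → A3`, `A3 → A4`, `A4 → A3`, `A4 → A5`, `A5 → A3`, the grounded-stratified
labeling `S` satisfies `S A1 = 0`, `S A2 = 1`, `S A3 = 3`, `S A4 = 1`, `S A5 = 2`.
This witnesses failure of Quality Precedence*: the attackers of `A5` are exactly `{A4}`
and those of `A2` exactly `{A1}`, with `S A1 < S A4`, yet `S A2 < S A5`. -/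
theorem quality_precedence_fails :
    let att : Fin 5 → Fin 5 → Prop := fun X Y =>
      (X = 0 ∧ Y = 1) ∨ (X = 1 ∧ Y = 2) ∨ (X = 2 ∧ Y = 3) ∨ (X = 3 ∧ Y = 2) ∨
      (X = 3 ∧ Y = 4) ∨ (X = 4 ∧ Y = 2)
    ∀ S : Fin 5 → ℕ∞, Stratified Sem.grounded att Set.univ S →
      (S 0 = 0 ∧ S 1 = 1 ∧ S 2 = 3 ∧ S 3 = 1 ∧ S 4 = 2) ∧
      {X : Fin 5 | att X 4} = {3} ∧ {X : Fin 5 | att X 1} = {0} ∧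
      S 0 < S 3 ∧ S 1 < S 4 := by
  intro att S h
  exact main5 S h
end

section
/- Let AF be the abstract argumentation framework with arguments {A1, …, A8} and attacks A8 → A7, A7 → A4, A6 → A5, A5 → A3, A3 → A2, A4 → A2, A2 → A1, A3 → A3, and A4 → A4. Then the (unique) grounded-stratified labeling S of AF satisfies S(A1) = 2, S(A2) = 1, S(A3) = ∞, S(A4) = ∞, S(A5) = 1, S(A6) = 0, S(A7) = 1, S(A8) = 0, while the (grounded, U)-characteristics satisfy N^AF_gr({A1}) = 1 and N^AF_gr({A2}) = 2. In particular, N^AF_gr({A1}) < N^AF_gr({A2}) but S(A1) > S(A2), so the implication "N^AF_σ({A}) < N^AF_σ({B}) implies S(A) < S(B) for all finite-valued comparisons" fails for general argumentation frameworks. -/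
/-- The attack-distance between two frameworks on the same arguments: the cardinality of
the symmetric difference of the attack relations. -/
noncomputable def attDist {α : Type*} (att att' : α → α → Prop) : ℕ :=
  Set.ncard {p : α × α | ¬ (att p.1 p.2 ↔ att' p.1 p.2)}

/-- The `(σ, U)`-characteristic of a set `C` of arguments: `0` if `C` is contained in the
in-set of some `σ`-labeling; otherwise the minimal attack-distance to a framework where
this holds (`sInf` of the empty set in `ℕ∞` being `∞`). -/
noncomputable def Nchar {α : Type*} (σ : Sem) (att : α → α → Prop) (C : Set α) : ℕ∞ :=
  sInf {n : ℕ∞ | ∃ att' : α → α → Prop,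
    (∃ L : α → Lab, SemLab σ att' Set.univ L ∧ C ⊆ inSet Set.univ L) ∧
    (attDist att att' : ℕ∞) = n}

/-! ### Auxiliary definitions -/


def att₀ : Fin 8 → Fin 8 → Prop := fun X Y =>
  (X = 7 ∧ Y = 6) ∨ (X = 6 ∧ Y = 3) ∨ (X = 5 ∧ Y = 4) ∨ (X = 4 ∧ Y = 2) ∨
  (X = 2 ∧ Y = 1) ∨ (X = 3 ∧ Y = 1) ∨ (X = 1 ∧ Y = 0) ∨ (X = 2 ∧ Y = 2) ∨
  (X = 3 ∧ Y = 3)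

instance att₀.dec : DecidableRel att₀ := fun _ _ => by unfold att₀; infer_instance

/-- `att₀` with the attack `1 → 0` removed. -/
def att₁ : Fin 8 → Fin 8 → Prop := fun X Y =>
  (X = 7 ∧ Y = 6) ∨ (X = 6 ∧ Y = 3) ∨ (X = 5 ∧ Y = 4) ∨ (X = 4 ∧ Y = 2) ∨
  (X = 2 ∧ Y = 1) ∨ (X = 3 ∧ Y = 1) ∨ (X = 2 ∧ Y = 2) ∨ (X = 3 ∧ Y = 3)

instance att₁.dec : DecidableRel att₁ := fun _ _ => by unfold att₁; infer_instance

/-- `att₀` with the attacks `2 → 1` and `3 → 1` removed. -/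
def att₂ : Fin 8 → Fin 8 → Prop := fun X Y =>
  (X = 7 ∧ Y = 6) ∨ (X = 6 ∧ Y = 3) ∨ (X = 5 ∧ Y = 4) ∨ (X = 4 ∧ Y = 2) ∨
  (X = 1 ∧ Y = 0) ∨ (X = 2 ∧ Y = 2) ∨ (X = 3 ∧ Y = 3)

instance att₂.dec : DecidableRel att₂ := fun _ _ => by unfold att₂; infer_instance

def C1 : Set (Fin 8) := {x | x ≠ 5 ∧ x ≠ 7}
def C2 : Set (Fin 8) := {x | x = 0 ∨ x = 2 ∨ x = 3}
def C3 : Set (Fin 8) := {x | x = 2 ∨ x = 3}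

/-! ### Generic forcing lemmas -/

lemma forced_in {α : Type*} {att : α → α → Prop} {C : Set α} {L : α → Lab} {a : α}
    (h : IsCompleteLab att C L) (ha : a ∈ C) (hno : ∀ b ∈ C, ¬ att b a) :
    L a = Lab.argIn := by
  cases hl : L a with
  | argIn => rfl
  | argOut =>
    obtain ⟨b, hb, _, hatt⟩ := h.1 a ha hl
    exact absurd hatt (hno b hb)
  | argUndec =>
    obtain ⟨b, hb, hatt, _⟩ := (h.2.2 a ha hl).2
    exact absurd hatt (hno b hb)

lemma forced_out {α : Type*} {att : α → α → Prop} {C : Set α} {L : α → Lab} {a b : α}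
    (h : IsCompleteLab att C L) (ha : a ∈ C) (hb : b ∈ C) (hatt : att b a)
    (hbin : L b = Lab.argIn) : L a = Lab.argOut := by
  cases hl : L a with
  | argIn =>
    have := h.2.1 a ha hl b hb hatt
    rw [hbin] at this; exact absurd this (by decide)
  | argOut => rfl
  | argUndec => exact absurd hbin ((h.2.2 a ha hl).1 b hb hatt)

/-! ### Stage lemmas: the unique complete labeling at each stratification stage -/


lemma stage1 {L : Fin 8 → Lab} (h : IsCompleteLab att₀ Set.univ L) :
    L 0 = Lab.argUndec ∧ L 1 = Lab.argUndec ∧ L 2 = Lab.argUndec ∧ L 3 = Lab.argUndec ∧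
    L 4 = Lab.argOut ∧ L 5 = Lab.argIn ∧ L 6 = Lab.argOut ∧ L 7 = Lab.argIn := by
  have h5 : L 5 = Lab.argIn :=
    forced_in h trivial (fun b _ => (by decide : ∀ b, ¬ att₀ b 5) b)
  have h7 : L 7 = Lab.argIn :=
    forced_in h trivial (fun b _ => (by decide : ∀ b, ¬ att₀ b 7) b)
  have h4 : L 4 = Lab.argOut := forced_out h trivial trivial (by decide : att₀ 5 4) h5
  have h6 : L 6 = Lab.argOut := forced_out h trivial trivial (by decide : att₀ 7 6) h7
  have h2 : L 2 = Lab.argUndec := by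
    cases hl : L 2 with
    | argIn =>
      have := h.2.1 2 trivial hl 2 trivial (by decide : att₀ 2 2)
      rw [hl] at this; exact absurd this (by decide)
    | argOut =>
      obtain ⟨b, _, hbin, hatt⟩ := h.1 2 trivial hl
      rcases (by decide : ∀ b, att₀ b 2 → b = 4 ∨ b = 2) b hatt with rfl | rfl
      · rw [h4] at hbin; exact absurd hbin (by decide)
      · rw [hl] at hbin; exact absurd hbin (by decide)
    | argUndec => rfl
  have h3 : L 3 = Lab.argUndec := by
    cases hl : L 3 with
    | argIn =>
      have := h.2.1 3 trivial hl 3 trivial (by decide : att₀ 3 3)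
      rw [hl] at this; exact absurd this (by decide)
    | argOut =>
      obtain ⟨b, _, hbin, hatt⟩ := h.1 3 trivial hl
      rcases (by decide : ∀ b, att₀ b 3 → b = 6 ∨ b = 3) b hatt with rfl | rfl
      · rw [h6] at hbin; exact absurd hbin (by decide)
      · rw [hl] at hbin; exact absurd hbin (by decide)
    | argUndec => rfl
  have h1 : L 1 = Lab.argUndec := by
    cases hl : L 1 with
    | argIn =>
      have := h.2.1 1 trivial hl 2 trivial (by decide : att₀ 2 1)
      rw [h2] at this; exact absurd this (by decide)
    | argOut =>
      obtain ⟨b, _, hbin, hatt⟩ := h.1 1 trivial hl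
      rcases (by decide : ∀ b, att₀ b 1 → b = 2 ∨ b = 3) b hatt with rfl | rfl
      · rw [h2] at hbin; exact absurd hbin (by decide)
      · rw [h3] at hbin; exact absurd hbin (by decide)
    | argUndec => rfl
  have h0 : L 0 = Lab.argUndec := by
    cases hl : L 0 with
    | argIn =>
      have := h.2.1 0 trivial hl 1 trivial (by decide : att₀ 1 0)
      rw [h1] at this; exact absurd this (by decide)
    | argOut =>
      obtain ⟨b, _, hbin, hatt⟩ := h.1 0 trivial hl
      rcases (by decide : ∀ b, att₀ b 0 → b = 1) b hatt with rfl
      rw [h1] at hbin; exact absurd hbin (by decide)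
    | argUndec => rfl
  exact ⟨h0, h1, h2, h3, h4, h5, h6, h7⟩

lemma memC1 : ∀ x : Fin 8, x ≠ 5 ∧ x ≠ 7 → x ∈ C1 := fun _ h => h
lemma memC2 : ∀ x : Fin 8, (x = 0 ∨ x = 2 ∨ x = 3) → x ∈ C2 := fun _ h => h
lemma memC3 : ∀ x : Fin 8, (x = 2 ∨ x = 3) → x ∈ C3 := fun _ h => h
lemma notC2 : ∀ x : Fin 8, ¬(x = 0 ∨ x = 2 ∨ x = 3) → x ∉ C2 := fun _ h => h
lemma notC3 : ∀ x : Fin 8, ¬(x = 2 ∨ x = 3) → x ∉ C3 := fun _ h => h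

lemma stage2 {L : Fin 8 → Lab} (h : IsCompleteLab att₀ C1 L) :
    L 0 = Lab.argOut ∧ L 1 = Lab.argIn ∧ L 2 = Lab.argOut ∧ L 3 = Lab.argOut ∧
    L 4 = Lab.argIn ∧ L 6 = Lab.argIn := by
  have m0 : (0 : Fin 8) ∈ C1 := memC1 0 (by decide)
  have m1 : (1 : Fin 8) ∈ C1 := memC1 1 (by decide)
  have m2 : (2 : Fin 8) ∈ C1 := memC1 2 (by decide)
  have m3 : (3 : Fin 8) ∈ C1 := memC1 3 (by decide)
  have m4 : (4 : Fin 8) ∈ C1 := memC1 4 (by decide)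
  have m6 : (6 : Fin 8) ∈ C1 := memC1 6 (by decide)
  have h4 : L 4 = Lab.argIn := by
    refine forced_in h m4 (fun b hb hatt => ?_)
    rcases (by decide : ∀ b, att₀ b 4 → b = 5) b hatt with rfl
    exact hb.1 rfl
  have h6 : L 6 = Lab.argIn := by
    refine forced_in h m6 (fun b hb hatt => ?_)
    rcases (by decide : ∀ b, att₀ b 6 → b = 7) b hatt with rfl
    exact hb.2 rfl
  have h2 : L 2 = Lab.argOut := forced_out h m2 m4 (by decide : att₀ 4 2) h4
  have h3 : L 3 = Lab.argOut := forced_out h m3 m6 (by decide : att₀ 6 3) h6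
  have h1 : L 1 = Lab.argIn := by
    cases hl : L 1 with
    | argIn => rfl
    | argOut =>
      obtain ⟨b, _, hbin, hatt⟩ := h.1 1 m1 hl
      rcases (by decide : ∀ b, att₀ b 1 → b = 2 ∨ b = 3) b hatt with rfl | rfl
      · rw [h2] at hbin; exact absurd hbin (by decide)
      · rw [h3] at hbin; exact absurd hbin (by decide)
    | argUndec =>
      obtain ⟨b, _, hatt, hbno⟩ := (h.2.2 1 m1 hl).2
      rcases (by decide : ∀ b, att₀ b 1 → b = 2 ∨ b = 3) b hatt with rfl | rfl
      · exact (hbno h2).elim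
      · exact (hbno h3).elim
  have h0 : L 0 = Lab.argOut := forced_out h m0 m1 (by decide : att₀ 1 0) h1
  exact ⟨h0, h1, h2, h3, h4, h6⟩

lemma stage3 {L : Fin 8 → Lab} (h : IsCompleteLab att₀ C2 L) :
    L 0 = Lab.argIn ∧ L 2 = Lab.argUndec ∧ L 3 = Lab.argUndec := by
  have m0 : (0 : Fin 8) ∈ C2 := memC2 0 (by decide)
  have m2 : (2 : Fin 8) ∈ C2 := memC2 2 (by decide)
  have m3 : (3 : Fin 8) ∈ C2 := memC2 3 (by decide)
  have h0 : L 0 = Lab.argIn := by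
    refine forced_in h m0 (fun b hb hatt => ?_)
    rcases (by decide : ∀ b, att₀ b 0 → b = 1) b hatt with rfl
    exact absurd hb (notC2 _ (by decide))
  have h2 : L 2 = Lab.argUndec := by
    cases hl : L 2 with
    | argIn =>
      have := h.2.1 2 m2 hl 2 m2 (by decide : att₀ 2 2)
      rw [hl] at this; exact absurd this (by decide)
    | argOut =>
      obtain ⟨b, hb, hbin, hatt⟩ := h.1 2 m2 hl
      rcases (by decide : ∀ b, att₀ b 2 → b = 4 ∨ b = 2) b hatt with rfl | rfl
      · exact absurd hb (notC2 _ (by decide))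
      · rw [hl] at hbin; exact absurd hbin (by decide)
    | argUndec => rfl
  have h3 : L 3 = Lab.argUndec := by
    cases hl : L 3 with
    | argIn =>
      have := h.2.1 3 m3 hl 3 m3 (by decide : att₀ 3 3)
      rw [hl] at this; exact absurd this (by decide)
    | argOut =>
      obtain ⟨b, hb, hbin, hatt⟩ := h.1 3 m3 hl
      rcases (by decide : ∀ b, att₀ b 3 → b = 6 ∨ b = 3) b hatt with rfl | rfl
      · exact absurd hb (notC2 _ (by decide))
      · rw [hl] at hbin; exact absurd hbin (by decide)
    | argUndec => rfl
  exact ⟨h0, h2, h3⟩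

lemma stage4 {L : Fin 8 → Lab} (h : IsCompleteLab att₀ C3 L) :
    L 2 = Lab.argUndec ∧ L 3 = Lab.argUndec := by
  have m2 : (2 : Fin 8) ∈ C3 := memC3 2 (by decide)
  have m3 : (3 : Fin 8) ∈ C3 := memC3 3 (by decide)
  have h2 : L 2 = Lab.argUndec := by
    cases hl : L 2 with
    | argIn =>
      have := h.2.1 2 m2 hl 2 m2 (by decide : att₀ 2 2)
      rw [hl] at this; exact absurd this (by decide)
    | argOut =>
      obtain ⟨b, hb, hbin, hatt⟩ := h.1 2 m2 hl
      rcases (by decide : ∀ b, att₀ b 2 → b = 4 ∨ b = 2) b hatt with rfl | rfl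
      · exact absurd hb (notC3 _ (by decide))
      · rw [hl] at hbin; exact absurd hbin (by decide)
    | argUndec => rfl
  have h3 : L 3 = Lab.argUndec := by
    cases hl : L 3 with
    | argIn =>
      have := h.2.1 3 m3 hl 3 m3 (by decide : att₀ 3 3)
      rw [hl] at this; exact absurd this (by decide)
    | argOut =>
      obtain ⟨b, hb, hbin, hatt⟩ := h.1 3 m3 hl
      rcases (by decide : ∀ b, att₀ b 3 → b = 6 ∨ b = 3) b hatt with rfl | rfl
      · exact absurd hb (notC3 _ (by decide))
      · rw [hl] at hbin; exact absurd hbin (by decide)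
    | argUndec => rfl
  exact ⟨h2, h3⟩

/-! ### Grounded labelings of the modified frameworks -/

def L₁ : Fin 8 → Lab :=
  ![Lab.argIn, Lab.argUndec, Lab.argUndec, Lab.argUndec,
    Lab.argOut, Lab.argIn, Lab.argOut, Lab.argIn]

def L₂ : Fin 8 → Lab :=
  ![Lab.argOut, Lab.argIn, Lab.argUndec, Lab.argUndec,
    Lab.argOut, Lab.argIn, Lab.argOut, Lab.argIn]

lemma L₁_complete : IsCompleteLab att₁ Set.univ L₁ := by
  refine ⟨?_, ?_, ?_⟩
  · intro a _ ha
    rcases (by decide : ∀ a, L₁ a = Lab.argOut → a = 4 ∨ a = 6) a ha with rfl | rfl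
    · exact ⟨5, trivial, rfl, by decide⟩
    · exact ⟨7, trivial, rfl, by decide⟩
  · intro a _ ha b _ hatt
    rcases (by decide : ∀ a, L₁ a = Lab.argIn → a = 0 ∨ a = 5 ∨ a = 7) a ha with rfl | rfl | rfl
    · exact absurd hatt ((by decide : ∀ b, ¬ att₁ b 0) b)
    · exact absurd hatt ((by decide : ∀ b, ¬ att₁ b 5) b)
    · exact absurd hatt ((by decide : ∀ b, ¬ att₁ b 7) b)
  · intro a _ ha
    rcases (by decide : ∀ a, L₁ a = Lab.argUndec → a = 1 ∨ a = 2 ∨ a = 3) a ha with rfl | rfl | rfl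
    · refine ⟨?_, 2, trivial, by decide, by decide⟩
      intro b _ hatt
      rcases (by decide : ∀ b, att₁ b 1 → b = 2 ∨ b = 3) b hatt with rfl | rfl <;> decide
    · refine ⟨?_, 2, trivial, by decide, by decide⟩
      intro b _ hatt
      rcases (by decide : ∀ b, att₁ b 2 → b = 4 ∨ b = 2) b hatt with rfl | rfl <;> decide
    · refine ⟨?_, 3, trivial, by decide, by decide⟩
      intro b _ hatt
      rcases (by decide : ∀ b, att₁ b 3 → b = 6 ∨ b = 3) b hatt with rfl | rfl <;> decide

lemma att₁_forced {L : Fin 8 → Lab} (h : IsCompleteLab att₁ Set.univ L) :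
    L 0 = Lab.argIn ∧ L 5 = Lab.argIn ∧ L 7 = Lab.argIn :=
  ⟨forced_in h trivial (fun b _ => (by decide : ∀ b, ¬ att₁ b 0) b),
   forced_in h trivial (fun b _ => (by decide : ∀ b, ¬ att₁ b 5) b),
   forced_in h trivial (fun b _ => (by decide : ∀ b, ¬ att₁ b 7) b)⟩

lemma L₁_grounded : SemLab Sem.grounded att₁ Set.univ L₁ := by
  refine ⟨L₁_complete, fun L' hL' _ x hx => ?_⟩
  obtain ⟨-, hx⟩ := hx
  obtain ⟨f0, f5, f7⟩ := att₁_forced hL'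
  rcases (by decide : ∀ x, L₁ x = Lab.argIn → x = 0 ∨ x = 5 ∨ x = 7) x hx with rfl | rfl | rfl
  exacts [⟨trivial, f0⟩, ⟨trivial, f5⟩, ⟨trivial, f7⟩]

lemma L₂_complete : IsCompleteLab att₂ Set.univ L₂ := by
  refine ⟨?_, ?_, ?_⟩
  · intro a _ ha
    rcases (by decide : ∀ a, L₂ a = Lab.argOut → a = 0 ∨ a = 4 ∨ a = 6) a ha with rfl | rfl | rfl
    · exact ⟨1, trivial, rfl, by decide⟩
    · exact ⟨5, trivial, rfl, by decide⟩
    · exact ⟨7, trivial, rfl, by decide⟩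
  · intro a _ ha b _ hatt
    rcases (by decide : ∀ a, L₂ a = Lab.argIn → a = 1 ∨ a = 5 ∨ a = 7) a ha with rfl | rfl | rfl
    · exact absurd hatt ((by decide : ∀ b, ¬ att₂ b 1) b)
    · exact absurd hatt ((by decide : ∀ b, ¬ att₂ b 5) b)
    · exact absurd hatt ((by decide : ∀ b, ¬ att₂ b 7) b)
  · intro a _ ha
    rcases (by decide : ∀ a, L₂ a = Lab.argUndec → a = 2 ∨ a = 3) a ha with rfl | rfl
    · refine ⟨?_, 2, trivial, by decide, by decide⟩
      intro b _ hatt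
      rcases (by decide : ∀ b, att₂ b 2 → b = 4 ∨ b = 2) b hatt with rfl | rfl <;> decide
    · refine ⟨?_, 3, trivial, by decide, by decide⟩
      intro b _ hatt
      rcases (by decide : ∀ b, att₂ b 3 → b = 6 ∨ b = 3) b hatt with rfl | rfl <;> decide

lemma att₂_forced {L : Fin 8 → Lab} (h : IsCompleteLab att₂ Set.univ L) :
    L 1 = Lab.argIn ∧ L 5 = Lab.argIn ∧ L 7 = Lab.argIn :=
  ⟨forced_in h trivial (fun b _ => (by decide : ∀ b, ¬ att₂ b 1) b),
   forced_in h trivial (fun b _ => (by decide : ∀ b, ¬ att₂ b 5) b),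
   forced_in h trivial (fun b _ => (by decide : ∀ b, ¬ att₂ b 7) b)⟩

lemma L₂_grounded : SemLab Sem.grounded att₂ Set.univ L₂ := by
  refine ⟨L₂_complete, fun L' hL' _ x hx => ?_⟩
  obtain ⟨-, hx⟩ := hx
  obtain ⟨f1, f5, f7⟩ := att₂_forced hL'
  rcases (by decide : ∀ x, L₂ x = Lab.argIn → x = 1 ∨ x = 5 ∨ x = 7) x hx with rfl | rfl | rfl
  exacts [⟨trivial, f1⟩, ⟨trivial, f5⟩, ⟨trivial, f7⟩]

/-! ### Attack distances -/

lemma attDist₁ : attDist att₀ att₁ = 1 := by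
  have hset : {p : Fin 8 × Fin 8 | ¬ (att₀ p.1 p.2 ↔ att₁ p.1 p.2)}
      = {((1 : Fin 8), (0 : Fin 8))} := by
    ext ⟨a, b⟩
    simp only [Set.mem_setOf_eq, Set.mem_singleton_iff, Prod.mk.injEq]
    exact (by decide : ∀ a b : Fin 8, ¬ (att₀ a b ↔ att₁ a b) ↔ (a = 1 ∧ b = 0)) a b
  rw [attDist, hset, Set.ncard_singleton]

lemma attDist₂ : attDist att₀ att₂ = 2 := by
  have hset : {p : Fin 8 × Fin 8 | ¬ (att₀ p.1 p.2 ↔ att₂ p.1 p.2)}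
      = {((2 : Fin 8), (1 : Fin 8)), ((3 : Fin 8), (1 : Fin 8))} := by
    ext ⟨a, b⟩
    simp only [Set.mem_setOf_eq, Set.mem_insert_iff, Set.mem_singleton_iff, Prod.mk.injEq]
    exact (by decide : ∀ a b : Fin 8,
      ¬ (att₀ a b ↔ att₂ a b) ↔ ((a = 2 ∧ b = 1) ∨ (a = 3 ∧ b = 1))) a b
  rw [attDist, hset, Set.ncard_pair (by decide)]

/-! ### Lower bounds for the characteristics -/

/-- No complete labeling of `att₀` itself puts argument `0` in. -/
lemma no_in_zero {att' : Fin 8 → Fin 8 → Prop} (hiff : ∀ a b, att₀ a b ↔ att' a b)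
    {L : Fin 8 → Lab} (h : IsCompleteLab att' Set.univ L) (h0 : L 0 = Lab.argIn) : False := by
  have h1out : L 1 = Lab.argOut := h.2.1 0 trivial h0 1 trivial ((hiff 1 0).mp (by decide))
  obtain ⟨c, _, hcin, hcatt⟩ := h.1 1 trivial h1out
  rcases (by decide : ∀ c, att₀ c 1 → c = 2 ∨ c = 3) c ((hiff c 1).mpr hcatt) with rfl | rfl
  · have := h.2.1 2 trivial hcin 2 trivial ((hiff 2 2).mp (by decide))
    rw [hcin] at this; exact absurd this (by decide)
  · have := h.2.1 3 trivial hcin 3 trivial ((hiff 3 3).mp (by decide))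
    rw [hcin] at this; exact absurd this (by decide)

/-- If a complete labeling of `att'` puts argument `1` in, then `att'` differs from
`att₀` in at least two places. -/
lemma one_in_two_changes {att' : Fin 8 → Fin 8 → Prop} {L : Fin 8 → Lab}
    (h : IsCompleteLab att' Set.univ L) (h1 : L 1 = Lab.argIn)
    (hsub : ∀ p ∈ {p : Fin 8 × Fin 8 | ¬ (att₀ p.1 p.2 ↔ att' p.1 p.2)},
      ∀ q ∈ {p : Fin 8 × Fin 8 | ¬ (att₀ p.1 p.2 ↔ att' p.1 p.2)}, p = q) : False := by
  set D := {p : Fin 8 × Fin 8 | ¬ (att₀ p.1 p.2 ↔ att' p.1 p.2)} with hD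
  have chain2 : L 2 = Lab.argOut → ∃ p ∈ D, p.2 = 2 ∨ p.2 = 4 ∨ p.2 = 5 := by
    intro h2out
    obtain ⟨c, _, hcin, hcatt⟩ := h.1 2 trivial h2out
    by_cases hc0 : att₀ c 2
    · rcases (by decide : ∀ c, att₀ c 2 → c = 4 ∨ c = 2) c hc0 with rfl | rfl
      · by_cases h54 : att' 5 4
        · have h5out : L 5 = Lab.argOut := h.2.1 4 trivial hcin 5 trivial h54
          obtain ⟨e, _, hein, heatt⟩ := h.1 5 trivial h5out
          exact ⟨(e, 5), fun hif => (by decide : ∀ e, ¬ att₀ e 5) e (hif.mpr heatt),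
            Or.inr (Or.inr rfl)⟩
        · exact ⟨(5, 4), fun hif => h54 (hif.mp (by decide)), Or.inr (Or.inl rfl)⟩
      · rw [h2out] at hcin; exact absurd hcin (by decide)
    · exact ⟨(c, 2), fun hif => hc0 (hif.mpr hcatt), Or.inl rfl⟩
  have chain3 : L 3 = Lab.argOut → ∃ p ∈ D, p.2 = 3 ∨ p.2 = 6 ∨ p.2 = 7 := by
    intro h3out
    obtain ⟨c, _, hcin, hcatt⟩ := h.1 3 trivial h3out
    by_cases hc0 : att₀ c 3
    · rcases (by decide : ∀ c, att₀ c 3 → c = 6 ∨ c = 3) c hc0 with rfl | rfl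
      · by_cases h76 : att' 7 6
        · have h7out : L 7 = Lab.argOut := h.2.1 6 trivial hcin 7 trivial h76
          obtain ⟨e, _, hein, heatt⟩ := h.1 7 trivial h7out
          exact ⟨(e, 7), fun hif => (by decide : ∀ e, ¬ att₀ e 7) e (hif.mpr heatt),
            Or.inr (Or.inr rfl)⟩
        · exact ⟨(7, 6), fun hif => h76 (hif.mp (by decide)), Or.inr (Or.inl rfl)⟩
      · rw [h3out] at hcin; exact absurd hcin (by decide)
    · exact ⟨(c, 3), fun hif => hc0 (hif.mpr hcatt), Or.inl rfl⟩
  by_cases h21 : att' 2 1 <;> by_cases h31 : att' 3 1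
  · obtain ⟨pA, mA, dA⟩ := chain2 (h.2.1 1 trivial h1 2 trivial h21)
    obtain ⟨pB, mB, dB⟩ := chain3 (h.2.1 1 trivial h1 3 trivial h31)
    have hpq := hsub pA mA pB mB
    rcases dA with hA | hA | hA <;> rcases dB with hB | hB | hB <;>
      (rw [hpq] at hA; rw [hA] at hB; exact absurd hB (by decide))
  · obtain ⟨pA, mA, dA⟩ := chain2 (h.2.1 1 trivial h1 2 trivial h21)
    have mB : ((3 : Fin 8), (1 : Fin 8)) ∈ D := fun hif => h31 (hif.mp (by decide))
    have hpq := hsub pA mA _ mB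
    rcases dA with hA | hA | hA <;> (rw [hpq] at hA; exact absurd hA (by decide))
  · obtain ⟨pB, mB, dB⟩ := chain3 (h.2.1 1 trivial h1 3 trivial h31)
    have mA : ((2 : Fin 8), (1 : Fin 8)) ∈ D := fun hif => h21 (hif.mp (by decide))
    have hpq := hsub _ mA pB mB
    rcases dB with hB | hB | hB <;> (rw [← hpq] at hB; exact absurd hB (by decide))
  · have mA : ((2 : Fin 8), (1 : Fin 8)) ∈ D := fun hif => h21 (hif.mp (by decide))
    have mB : ((3 : Fin 8), (1 : Fin 8)) ∈ D := fun hif => h31 (hif.mp (by decide))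
    exact absurd (hsub _ mA _ mB) (by decide)

/-! ### The characteristics -/

lemma Nchar_zero : Nchar Sem.grounded att₀ {0} = 1 := by
  apply le_antisymm
  · apply sInf_le
    refine ⟨att₁, ⟨L₁, L₁_grounded, ?_⟩, by rw [attDist₁]; rfl⟩
    intro x hx
    rw [Set.mem_singleton_iff] at hx; subst hx
    exact ⟨trivial, rfl⟩
  · apply le_sInf
    rintro n ⟨att', ⟨L, hL, hsub0⟩, rfl⟩
    have hL0 : L 0 = Lab.argIn := (hsub0 (Set.mem_singleton 0)).2
    have hne : attDist att₀ att' ≠ 0 := by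
      intro hzero
      have hDempty : {p : Fin 8 × Fin 8 | ¬ (att₀ p.1 p.2 ↔ att' p.1 p.2)} = ∅ :=
        ((Set.ncard_eq_zero (Set.toFinite _)).mp hzero)
      have hiff : ∀ a b, att₀ a b ↔ att' a b := by
        intro a b
        by_contra hc
        have : (a, b) ∈ {p : Fin 8 × Fin 8 | ¬ (att₀ p.1 p.2 ↔ att' p.1 p.2)} := hc
        rw [hDempty] at this
        exact this
      exact no_in_zero hiff hL.1 hL0
    exact_mod_cast Nat.one_le_iff_ne_zero.mpr hne

lemma Nchar_one : Nchar Sem.grounded att₀ {1} = 2 := by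
  apply le_antisymm
  · apply sInf_le
    refine ⟨att₂, ⟨L₂, L₂_grounded, ?_⟩, by rw [attDist₂]; rfl⟩
    intro x hx
    rw [Set.mem_singleton_iff] at hx; subst hx
    exact ⟨trivial, rfl⟩
  · apply le_sInf
    rintro n ⟨att', ⟨L, hL, hsub1⟩, rfl⟩
    have hL1 : L 1 = Lab.argIn := (hsub1 (Set.mem_singleton 1)).2
    have hge : 2 ≤ attDist att₀ att' := by
      by_contra hlt
      push_neg at hlt
      have hle1 : Set.ncard {p : Fin 8 × Fin 8 | ¬ (att₀ p.1 p.2 ↔ att' p.1 p.2)} ≤ 1 := by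
        rw [attDist] at hlt; omega
      have hsub := (Set.ncard_le_one (Set.toFinite _)).mp hle1
      exact one_in_two_changes hL.1 hL1 hsub
    exact_mod_cast hge

/-! ### The main theorem -/

lemma fin8_cases : ∀ x : Fin 8,
    x = 0 ∨ x = 1 ∨ x = 2 ∨ x = 3 ∨ x = 4 ∨ x = 5 ∨ x = 6 ∨ x = 7 := by decide

/-- In the framework with arguments `{A1, …, A8} = {0, …, 7}` and attacks
`A8 → A7`, `A7 → A4`, `A6 → A5`, `A5 → A3`, `A3 → A2`, `A4 → A2`, `A2 → A1`, `A3 → A3`,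
`A4 → A4`, the grounded-stratified labeling `S` satisfies `S A1 = 2`, `S A2 = 1`,
`S A3 = ∞`, `S A4 = ∞`, `S A5 = 1`, `S A6 = 0`, `S A7 = 1`, `S A8 = 0`, while
`N^AF_gr({A1}) = 1` and `N^AF_gr({A2}) = 2`. In particular
`N^AF_gr({A1}) < N^AF_gr({A2})` but `S A2 < S A1`. -/
theorem sigma_characteristic_counterexample :
    let att : Fin 8 → Fin 8 → Prop := fun X Y =>
      (X = 7 ∧ Y = 6) ∨ (X = 6 ∧ Y = 3) ∨ (X = 5 ∧ Y = 4) ∨ (X = 4 ∧ Y = 2) ∨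
      (X = 2 ∧ Y = 1) ∨ (X = 3 ∧ Y = 1) ∨ (X = 1 ∧ Y = 0) ∨ (X = 2 ∧ Y = 2) ∨
      (X = 3 ∧ Y = 3)
    ∀ S : Fin 8 → ℕ∞, Stratified Sem.grounded att Set.univ S →
      (S 0 = 2 ∧ S 1 = 1 ∧ S 2 = ⊤ ∧ S 3 = ⊤ ∧ S 4 = 1 ∧ S 5 = 0 ∧ S 6 = 1 ∧ S 7 = 0) ∧
      Nchar Sem.grounded att {0} = 1 ∧ Nchar Sem.grounded att {1} = 2 ∧
      Nchar Sem.grounded att {0} < Nchar Sem.grounded att {1} ∧ S 1 < S 0 := by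
  intro att S hS
  rw [show att = att₀ from rfl] at hS ⊢
  have hvals : S 0 = 2 ∧ S 1 = 1 ∧ S 2 = ⊤ ∧ S 3 = ⊤ ∧ S 4 = 1 ∧ S 5 = 0 ∧ S 6 = 1 ∧
      S 7 = 0 := by
    -- stage 1
    cases hS with
    | ofEmpty L hL hin _ =>
      obtain ⟨-, -, -, -, -, f5, -, -⟩ := stage1 hL.1
      have : (5 : Fin 8) ∈ inSet Set.univ L := ⟨trivial, f5⟩
      rw [hin] at this; exact this.elim
    | ofStep L S' hL hin hS' h0 h1 =>
      obtain ⟨f0, f1, f2, f3, f4, f5, f6, f7⟩ := stage1 hL.1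
      have hin_eq : inSet Set.univ L = {x : Fin 8 | x = 5 ∨ x = 7} := by
        ext x
        constructor
        · rintro ⟨-, hx⟩
          rcases fin8_cases x with rfl | rfl | rfl | rfl | rfl | rfl | rfl | rfl
          · rw [f0] at hx; exact absurd hx (by decide)
          · rw [f1] at hx; exact absurd hx (by decide)
          · rw [f2] at hx; exact absurd hx (by decide)
          · rw [f3] at hx; exact absurd hx (by decide)
          · rw [f4] at hx; exact absurd hx (by decide)
          · exact Or.inl rfl
          · rw [f6] at hx; exact absurd hx (by decide)
          · exact Or.inr rfl
        · intro hx
          rcases hx with rfl | rfl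
          exacts [⟨trivial, f5⟩, ⟨trivial, f7⟩]
      have hS5 : S 5 = 0 := h0 5 ⟨trivial, f5⟩
      have hS7 : S 7 = 0 := h0 7 ⟨trivial, f7⟩
      have hdiff : Set.univ \ inSet Set.univ L = C1 := by
        rw [hin_eq]; ext x
        simp only [Set.mem_diff, Set.mem_univ, true_and, Set.mem_setOf_eq, C1]
        tauto
      rw [hdiff] at hS' h1
      have hS0 : S 0 = 1 + S' 0 := h1 0 (memC1 0 (by decide))
      have hS1 : S 1 = 1 + S' 1 := h1 1 (memC1 1 (by decide))
      have hS2 : S 2 = 1 + S' 2 := h1 2 (memC1 2 (by decide))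
      have hS3 : S 3 = 1 + S' 3 := h1 3 (memC1 3 (by decide))
      have hS4 : S 4 = 1 + S' 4 := h1 4 (memC1 4 (by decide))
      have hS6 : S 6 = 1 + S' 6 := h1 6 (memC1 6 (by decide))
      -- stage 2
      cases hS' with
      | ofEmpty L₂ hL₂ hin₂ _ =>
        obtain ⟨-, -, -, -, g4, -⟩ := stage2 hL₂.1
        have : (4 : Fin 8) ∈ inSet C1 L₂ := ⟨memC1 4 (by decide), g4⟩
        rw [hin₂] at this; exact this.elim
      | ofStep L₂ S'' hL₂ hin₂ hS'' g0 g1 =>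
        obtain ⟨g0l, g1l, g2l, g3l, g4l, g6l⟩ := stage2 hL₂.1
        have hin2_eq : inSet C1 L₂ = {x : Fin 8 | x = 1 ∨ x = 4 ∨ x = 6} := by
          ext x
          constructor
          · rintro ⟨hxC, hx⟩
            rcases fin8_cases x with rfl | rfl | rfl | rfl | rfl | rfl | rfl | rfl
            · rw [g0l] at hx; exact absurd hx (by decide)
            · exact Or.inl rfl
            · rw [g2l] at hx; exact absurd hx (by decide)
            · rw [g3l] at hx; exact absurd hx (by decide)
            · exact Or.inr (Or.inl rfl)
            · exact absurd rfl hxC.1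
            · exact Or.inr (Or.inr rfl)
            · exact absurd rfl hxC.2
          · intro hx
            rcases hx with rfl | rfl | rfl
            exacts [⟨memC1 1 (by decide), g1l⟩, ⟨memC1 4 (by decide), g4l⟩,
              ⟨memC1 6 (by decide), g6l⟩]
        have hS'1 : S' 1 = 0 := g0 1 ⟨memC1 1 (by decide), g1l⟩
        have hS'4 : S' 4 = 0 := g0 4 ⟨memC1 4 (by decide), g4l⟩
        have hS'6 : S' 6 = 0 := g0 6 ⟨memC1 6 (by decide), g6l⟩
        have hdiff2 : C1 \ inSet C1 L₂ = C2 := by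
          rw [hin2_eq]; ext x
          simp only [Set.mem_diff, Set.mem_setOf_eq, C1, C2]
          exact (by decide : ∀ x : Fin 8,
            ((x ≠ 5 ∧ x ≠ 7) ∧ ¬(x = 1 ∨ x = 4 ∨ x = 6)) ↔ (x = 0 ∨ x = 2 ∨ x = 3)) x
        rw [hdiff2] at hS'' g1
        have hS'0 : S' 0 = 1 + S'' 0 := g1 0 (memC2 0 (by decide))
        have hS'2 : S' 2 = 1 + S'' 2 := g1 2 (memC2 2 (by decide))
        have hS'3 : S' 3 = 1 + S'' 3 := g1 3 (memC2 3 (by decide))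
        -- stage 3
        cases hS'' with
        | ofEmpty L₃ hL₃ hin₃ _ =>
          obtain ⟨k0, -, -⟩ := stage3 hL₃.1
          have : (0 : Fin 8) ∈ inSet C2 L₃ := ⟨memC2 0 (by decide), k0⟩
          rw [hin₃] at this; exact this.elim
        | ofStep L₃ S''' hL₃ hin₃ hS''' k0 k1 =>
          obtain ⟨k0l, k2l, k3l⟩ := stage3 hL₃.1
          have hin3_eq : inSet C2 L₃ = {x : Fin 8 | x = 0} := by
            ext x
            constructor
            · rintro ⟨hxC, hx⟩
              rcases hxC with rfl | rfl | rfl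
              · exact rfl
              · rw [k2l] at hx; exact absurd hx (by decide)
              · rw [k3l] at hx; exact absurd hx (by decide)
            · intro hx
              rcases hx with rfl
              exact ⟨memC2 0 (by decide), k0l⟩
          have hS''0 : S'' 0 = 0 := k0 0 ⟨memC2 0 (by decide), k0l⟩
          have hdiff3 : C2 \ inSet C2 L₃ = C3 := by
            rw [hin3_eq]; ext x
            simp only [Set.mem_diff, Set.mem_setOf_eq, C2, C3]
            exact (by decide : ∀ x : Fin 8,
              ((x = 0 ∨ x = 2 ∨ x = 3) ∧ ¬ x = 0) ↔ (x = 2 ∨ x = 3)) x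
          rw [hdiff3] at hS''' k1
          have hS''2 : S'' 2 = 1 + S''' 2 := k1 2 (memC3 2 (by decide))
          have hS''3 : S'' 3 = 1 + S''' 3 := k1 3 (memC3 3 (by decide))
          -- stage 4
          cases hS''' with
          | ofEmpty L₄ hL₄ hin₄ hTop =>
            have t2 : S''' 2 = ⊤ := hTop 2 (memC3 2 (by decide))
            have t3 : S''' 3 = ⊤ := hTop 3 (memC3 3 (by decide))
            refine ⟨?_, ?_, ?_, ?_, ?_, hS5, ?_, hS7⟩
            · rw [hS0, hS'0, hS''0]; rfl
            · rw [hS1, hS'1]; rfl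
            · rw [hS2, hS'2, hS''2, t2]; simp
            · rw [hS3, hS'3, hS''3, t3]; simp
            · rw [hS4, hS'4]; rfl
            · rw [hS6, hS'6]; rfl
          | ofStep L₄ S'''' hL₄ hin₄ _ _ _ =>
            obtain ⟨q2, q3⟩ := stage4 hL₄.1
            obtain ⟨x, hxC, hx⟩ := hin₄
            rcases hxC with rfl | rfl
            · rw [q2] at hx; exact absurd hx (by decide)
            · rw [q3] at hx; exact absurd hx (by decide)
  refine ⟨hvals, Nchar_zero, Nchar_one, ?_, ?_⟩
  · rw [Nchar_zero, Nchar_one]; norm_num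
  · rw [hvals.1, hvals.2.1]; norm_num
end
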